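/- arXiv:2202.00936 — 6 statements merged into one kernel-verified Lean document; each statement's English description precedes it below -/
import Mathlib

section
/- Let G = (μ,𝒱,𝒲,ℰ,𝒫,f,g) be a GCD graph, and let L_s(v,w) = ∑_{p | vw/gcd(v,w)², p ≥ s} 1/p. Assume δ(G) ≥ 1/s^{1/4}, ℛ^♮(G) = ∅, and ℰ ⊆ {(v,w) ∈ 𝒱×𝒲 : L_s(v,w) ≥ 1/s^{1/4}}, with s ≥ 1 sufficiently large. Then there exists a GCD subgraph G' = (μ,𝒱,𝒲,ℰ',𝒫,f,g) of G (same vertex sets, primes and f,g) such that q(G') ≥ q(G)/2 and ℰ' ⊆ {(v,w) ∈ 𝒱×𝒲 : ∑_{p | vw/gcd(v,w)², p ≥ s, p ∉ ℛ(G)} 1/p ≥ 3/(4 s^{1/4})}. -/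
open Finset

/-- A GCD graph in the sense of Koukoulopoulos--Maynard. -/
structure GCDGraph where
  /-- the measure `μ` on `ℕ` (given by its weights) -/
  mu : ℕ → ℝ
  mu_nonneg : ∀ n, 0 ≤ mu n
  /-- the vertex set `𝒱` -/
  V : Finset ℕ
  /-- the vertex set `𝒲` -/
  W : Finset ℕ
  /-- the edge set `ℰ` -/
  E : Finset (ℕ × ℕ)
  /-- the set of primes `𝒫` -/
  P : Finset ℕ
  /-- the exponent function `f : 𝒫 → ℤ_{≥0}` -/
  f : ℕ → ℕ
  /-- the exponent function `g : 𝒫 → ℤ_{≥0}` -/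
  g : ℕ → ℕ
  V_pos : ∀ v ∈ V, 0 < v
  W_pos : ∀ w ∈ W, 0 < w
  E_sub : E ⊆ V ×ˢ W
  P_prime : ∀ p ∈ P, p.Prime
  div_V : ∀ p ∈ P, ∀ v ∈ V, p ^ f p ∣ v
  div_W : ∀ p ∈ P, ∀ w ∈ W, p ^ g p ∣ w
  exact_gcd : ∀ p ∈ P, ∀ e ∈ E, p ^ min (f p) (g p) ∣ Nat.gcd e.1 e.2 ∧
    ¬ p ^ (min (f p) (g p) + 1) ∣ Nat.gcd e.1 e.2
  diff_exact_V : ∀ p ∈ P, f p ≠ g p → ∀ v ∈ V, p ^ f p ∣ v ∧ ¬ p ^ (f p + 1) ∣ v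
  diff_exact_W : ∀ p ∈ P, f p ≠ g p → ∀ w ∈ W, p ^ g p ∣ w ∧ ¬ p ^ (g p + 1) ∣ w

namespace GCDGraph

/-- `μ(𝒱)`. -/
noncomputable def muV (G : GCDGraph) : ℝ := ∑ v ∈ G.V, G.mu v

/-- `μ(𝒲)`. -/
noncomputable def muW (G : GCDGraph) : ℝ := ∑ w ∈ G.W, G.mu w

/-- `μ(ℰ)`, using the product measure on `ℕ²`. -/
noncomputable def muE (G : GCDGraph) : ℝ := ∑ e ∈ G.E, G.mu e.1 * G.mu e.2

/-- The edge density `δ(G)` (with the convention `x/0 = 0`). -/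
noncomputable def density (G : GCDGraph) : ℝ := G.muE / (G.muV * G.muW)

/-- `ℛ(G)`: primes not in `𝒫` dividing `gcd(v,w)` for some edge `(v,w)`. -/
def RSet (G : GCDGraph) : Set ℕ :=
  {p | p.Prime ∧ p ∉ G.P ∧ ∃ e ∈ G.E, p ∣ Nat.gcd e.1 e.2}

/-- The quality `q(G)`. -/
noncomputable def quality (G : GCDGraph) : ℝ :=
  G.density ^ 10 * G.muV * G.muW *
    ∏ p ∈ G.P, (p : ℝ) ^ (max (G.f p) (G.g p) - min (G.f p) (G.g p)) /
      ((1 - (if G.f p = G.g p ∧ 1 ≤ G.f p then 1 / (p : ℝ) else 0)) ^ 2 *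
        (1 - (p : ℝ) ^ (-(31 : ℝ) / 30)) ^ 10)

/-- `G'` is a GCD subgraph of `G`. -/
def IsSubgraph (G' G : GCDGraph) : Prop :=
  G'.mu = G.mu ∧ G'.V ⊆ G.V ∧ G'.W ⊆ G.W ∧ G'.E ⊆ G.E ∧ G.P ⊆ G'.P ∧
    ∀ p ∈ G.P, G'.f p = G.f p ∧ G'.g p = G.g p

/-- `μ(Γ_G(v))` for `v ∈ 𝒱`. -/
noncomputable def muGammaV (G : GCDGraph) (v : ℕ) : ℝ :=
  ∑ e ∈ G.E.filter (fun e => e.1 = v), G.mu e.2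

/-- `μ(Γ_G(w))` for `w ∈ 𝒲`. -/
noncomputable def muGammaW (G : GCDGraph) (w : ℕ) : ℝ :=
  ∑ e ∈ G.E.filter (fun e => e.2 = w), G.mu e.1

/-- `μ(𝒱_{p^k})` where `𝒱_{p^k} = {v ∈ 𝒱 : p^k ∥ v}`. -/
noncomputable def muVpk (G : GCDGraph) (p k : ℕ) : ℝ :=
  ∑ v ∈ G.V.filter (fun v => p ^ k ∣ v ∧ ¬ p ^ (k + 1) ∣ v), G.mu v

/-- `μ(𝒲_{p^k})` where `𝒲_{p^k} = {w ∈ 𝒲 : p^k ∥ w}`. -/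
noncomputable def muWpk (G : GCDGraph) (p k : ℕ) : ℝ :=
  ∑ w ∈ G.W.filter (fun w => p ^ k ∣ w ∧ ¬ p ^ (k + 1) ∣ w), G.mu w

/-- `μ(ℰ_{p^k,p^l})` where `ℰ_{p^k,p^l} = ℰ ∩ (𝒱_{p^k} × 𝒲_{p^l})`. -/
noncomputable def muEpkl (G : GCDGraph) (p k l : ℕ) : ℝ :=
  ∑ e ∈ G.E.filter (fun e => (p ^ k ∣ e.1 ∧ ¬ p ^ (k + 1) ∣ e.1) ∧
      (p ^ l ∣ e.2 ∧ ¬ p ^ (l + 1) ∣ e.2)), G.mu e.1 * G.mu e.2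

/-- `ℛ^♮(G)`. -/
noncomputable def RSharp (G : GCDGraph) : Set ℕ :=
  {p ∈ G.RSet | ∀ k : ℕ,
    min (G.muVpk p k / G.muV) (G.muWpk p k / G.muW) ≤ 1 - 1 / Real.sqrt p}

/-- `𝒫_diff(G) = {p ∈ 𝒫 : f(p) ≠ g(p)}`. -/
def Pdiff (G : GCDGraph) : Finset ℕ := G.P.filter (fun p => G.f p ≠ G.g p)

end GCDGraph

open GCDGraph

/-- `L_s(v,w) = ∑_{p | vw/gcd(v,w)², p ≥ s} 1/p`. -/
noncomputable def Lfun (s : ℝ) (v w : ℕ) : ℝ :=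
  ∑ p ∈ (v * w / Nat.gcd v w ^ 2).primeFactors,
    if s ≤ (p : ℝ) then 1 / (p : ℝ) else 0



lemma exists_totient_small (ε : ℝ) (hε : 0 < ε) :
    ∃ m : ℕ, 0 < m ∧ (m.totient : ℝ) ≤ ε * m := by
  have hns := not_summable_one_div_on_primes
  have hnb : ¬ ∀ T : Finset ℕ, ∑ n ∈ T, Set.indicator {p | p.Prime} (fun n : ℕ => (1:ℝ)/n) n ≤ -Real.log ε := by
    intro h
    exact hns (summable_of_sum_le (fun n => Set.indicator_nonneg (fun p _ => by positivity) n) h)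
  push_neg at hnb
  obtain ⟨T, hT⟩ := hnb
  classical
  set T' := T.filter Nat.Prime with hT'
  have hsum : ∑ n ∈ T, Set.indicator {p | p.Prime} (fun n : ℕ => (1:ℝ)/n) n
      = ∑ p ∈ T', 1/(p:ℝ) := by
    rw [hT', Finset.sum_filter]
    refine Finset.sum_congr rfl fun n _ => ?_
    by_cases hn : n.Prime
    · rw [if_pos hn]; exact Set.indicator_of_mem hn _
    · rw [if_neg hn]; exact Set.indicator_of_notMem hn _
  rw [hsum] at hT
  set m := ∏ p ∈ T', p with hm
  have hprimes : ∀ p ∈ T', p.Prime := fun p hp => (Finset.mem_filter.mp hp).2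
  have hmpos : 0 < m := Finset.prod_pos fun p hp => (hprimes p hp).pos
  refine ⟨m, hmpos, ?_⟩
  have hpf : m.primeFactors = T' := Nat.primeFactors_prod hprimes
  have htot : (m.totient : ℝ) = m * ∏ p ∈ T', (1 - 1/(p:ℝ)) := by
    have h2 := Nat.totient_eq_mul_prod_factors m
    rw [hpf] at h2
    have h3 : ((m.totient : ℚ) : ℝ) = ((m * ∏ p ∈ T', (1 - (p:ℚ)⁻¹) : ℚ) : ℝ) := by
      exact_mod_cast congrArg (fun q : ℚ => (q : ℝ)) h2
    push_cast at h3
    simpa [one_div] using h3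
  rw [htot]
  have hprod : ∏ p ∈ T', (1 - 1/(p:ℝ)) ≤ ε := by
    have h1 : ∏ p ∈ T', (1 - 1/(p:ℝ)) ≤ ∏ p ∈ T', Real.exp (-(1/(p:ℝ))) := by
      refine Finset.prod_le_prod (fun p hp => ?_) (fun p hp => ?_)
      · have := (hprimes p hp).two_le
        have : (2:ℝ) ≤ p := by exact_mod_cast this
        have hp1 : 1/(p:ℝ) ≤ 1/2 := by
          apply div_le_div_of_nonneg_left <;> linarith
        linarith
      · have := Real.add_one_le_exp (-(1/(p:ℝ)))
        linarith
    rw [← Real.exp_sum] at h1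
    calc ∏ p ∈ T', (1 - 1/(p:ℝ)) ≤ Real.exp (∑ p ∈ T', -(1/(p:ℝ))) := h1
      _ ≤ Real.exp (Real.log ε) := by
          apply Real.exp_le_exp.mpr
          rw [Finset.sum_neg_distrib]
          linarith
      _ = ε := Real.exp_log hε
  have hm0 : (0:ℝ) ≤ m := by positivity
  nlinarith

-- telescoping step
lemma telescope_step (A μ : ℝ) (hA : 1 ≤ A) (hμ : 0 < μ) :
    1 / ((A + μ) * Real.sqrt (A + μ)) ≤ 2 / μ * (1 / Real.sqrt A - 1 / Real.sqrt (A + μ)) := by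
  have hA0 : 0 < A := by linarith
  have hB0 : 0 < A + μ := by linarith
  set x := Real.sqrt A with hx
  set y := Real.sqrt (A + μ) with hy
  have hx0 : 0 < x := Real.sqrt_pos.mpr hA0
  have hy0 : 0 < y := Real.sqrt_pos.mpr hB0
  have hxy : x ≤ y := Real.sqrt_le_sqrt (by linarith)
  have hx2 : x ^ 2 = A := Real.sq_sqrt hA0.le
  have hy2 : y ^ 2 = A + μ := Real.sq_sqrt hB0.le
  have hyB : (A + μ) * y = y ^ 3 := by rw [← hy2]; ring
  have hμxy : μ = y^2 - x^2 := by rw [hx2, hy2]; ring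
  have h3 : (1:ℝ)/x - 1/y = (y-x)/(x*y) := by field_simp
  have h2 : 2/μ * ((y - x)/(x*y)) = (2*(y-x))/(μ*(x*y)) := by field_simp
  rw [hyB, h3, h2, div_le_div_iff₀ (by positivity) (by positivity)]
  nlinarith [mul_nonneg (mul_nonneg hy0.le (by linarith : (0:ℝ) ≤ 2*y+x)) (sq_nonneg (y-x)),
    mul_pos hx0 hy0]

lemma prime_tail_sum (ε : ℝ) (hε : 0 < ε) :
    ∃ s₀ : ℝ, 1 ≤ s₀ ∧ ∀ s : ℝ, s₀ ≤ s → ∀ F : Finset ℕ,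
      (∀ p ∈ F, p.Prime ∧ s ≤ (p:ℝ)) →
      ∑ p ∈ F, 1 / ((p:ℝ) * Real.sqrt p) ≤ ε / Real.sqrt s := by
  obtain ⟨m, hm0, hmtot⟩ := exists_totient_small (ε/4) (by linarith)
  refine ⟨max (m+1 : ℕ) (max 1 (4 * m.totient / ε)), le_trans (by norm_num) (le_max_of_le_right (le_max_left _ _)), fun s hs F hF => ?_⟩
  classical
  have hs1 : (1:ℝ) ≤ s := le_trans (le_max_of_le_right (le_max_left _ _)) hs
  have hsm : (m:ℝ) + 1 ≤ s := by
    have h := le_trans (le_max_left ((m+1:ℕ):ℝ) _) hs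
    push_cast at h; linarith
  have hstot : 4 * (m.totient:ℝ) / ε ≤ s := le_trans (le_max_of_le_right (le_max_right _ _)) hs
  set a := ⌈s⌉₊ with ha
  have has : s ≤ (a:ℝ) := Nat.le_ceil s
  have ha1 : 1 ≤ a := by
    rw [Nat.one_le_ceil_iff]; linarith
  -- all elements of F are ≥ a and coprime to m
  have hFa : ∀ n ∈ F, a ≤ n := fun n hn => Nat.ceil_le.mpr (hF n hn).2
  have hFcop : ∀ n ∈ F, m.Coprime n := by
    intro n hn
    obtain ⟨hp, hsn⟩ := hF n hn
    have hmn : m < n := by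
      have h : (m:ℝ) < (n:ℝ) := by linarith
      exact_mod_cast h
    exact ((Nat.Prime.coprime_iff_not_dvd hp).mpr
      (fun hd => absurd (Nat.le_of_dvd hm0 hd) (not_le.mpr hmn))).symm
  set f : ℕ → ℝ := fun n => 1 / ((n:ℝ) * Real.sqrt n) with hf
  have hf0 : ∀ n, 0 ≤ f n := fun n => by positivity
  set c : ℕ → ℝ := fun j => 1 / (((a + j * m : ℕ):ℝ) * Real.sqrt ((a + j * m : ℕ):ℝ)) with hc
  have hc0 : ∀ j, 0 ≤ c j := fun j => by positivity
  set K := F.sup (fun n => (n - a) / m) with hK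
  -- fiber decomposition
  have hfib : ∑ n ∈ F, f n =
      ∑ j ∈ range (K+1), ∑ n ∈ F.filter (fun n => (n - a) / m = j), f n :=
    (Finset.sum_fiberwise_of_maps_to (fun n hn => Finset.mem_range.mpr
      (Nat.lt_succ_of_le (Finset.le_sup hn))) f).symm
  have hinner : ∀ j, ∑ n ∈ F.filter (fun n => (n - a) / m = j), f n ≤ (m.totient : ℝ) * c j := by
    intro j
    have hsub : F.filter (fun n => (n - a) / m = j) ⊆
        (Finset.Ico (a + j*m) ((a + j*m) + m)).filter m.Coprime := by
      intro n hn
      obtain ⟨hnF, hj⟩ := Finset.mem_filter.mp hn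
      have han := hFa n hnF
      have h1 : j * m ≤ n - a := by
        rw [← hj]; exact Nat.div_mul_le_self _ _
      have h2 : n - a < j * m + m := by
        have hlt : (n - a)/m < j+1 := by omega
        have h2' := (Nat.div_lt_iff_lt_mul hm0).mp hlt
        rwa [add_one_mul] at h2'
      refine Finset.mem_filter.mpr ⟨Finset.mem_Ico.mpr ⟨?_, ?_⟩, hFcop n hnF⟩
      · omega
      · omega
    have hcard : (F.filter (fun n => (n - a) / m = j)).card ≤ m.totient := by
      calc (F.filter (fun n => (n - a) / m = j)).card
          ≤ ((Finset.Ico (a + j*m) ((a + j*m) + m)).filter m.Coprime).card :=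
            Finset.card_le_card hsub
        _ = m.totient := Nat.filter_coprime_Ico_eq_totient m (a + j*m)
    have hfle : ∀ n ∈ F.filter (fun n => (n - a) / m = j), f n ≤ c j := by
      intro n hn
      obtain ⟨hnF, hj⟩ := Finset.mem_filter.mp hn
      have h1 : a + j * m ≤ n := by
        have han := hFa n hnF
        have : j * m ≤ n - a := by rw [← hj]; exact Nat.div_mul_le_self _ _
        omega
      have h1' : ((a + j*m : ℕ):ℝ) ≤ (n:ℝ) := by exact_mod_cast h1
      have hb0 : (0:ℝ) < ((a + j*m : ℕ):ℝ) := by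
        have : 1 ≤ a + j * m := by omega
        exact_mod_cast Nat.lt_of_lt_of_le Nat.zero_lt_one this
      apply one_div_le_one_div_of_le (by positivity)
      exact mul_le_mul h1' (Real.sqrt_le_sqrt h1') (Real.sqrt_nonneg _) (by positivity)
    calc ∑ n ∈ F.filter (fun n => (n - a) / m = j), f n
        ≤ ∑ n ∈ F.filter (fun n => (n - a) / m = j), c j := Finset.sum_le_sum hfle
      _ = (F.filter (fun n => (n - a) / m = j)).card * c j := by rw [Finset.sum_const, nsmul_eq_mul]
      _ ≤ (m.totient : ℝ) * c j := by
          apply mul_le_mul_of_nonneg_right _ (hc0 j)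
          exact_mod_cast hcard
  -- telescoping bound on ∑ c j
  set g : ℕ → ℝ := fun j => 1 / Real.sqrt ((a + j * m : ℕ):ℝ) with hg
  have htel : ∀ j : ℕ, c (j+1) ≤ 2 / m * (g j - g (j+1)) := by
    intro j
    have hA1 : (1:ℝ) ≤ ((a + j*m : ℕ):ℝ) := by
      have : 1 ≤ a + j * m := by omega
      exact_mod_cast this
    have hcast : ((a + (j+1)*m : ℕ):ℝ) = ((a + j*m : ℕ):ℝ) + (m:ℝ) := by push_cast; ring
    have := telescope_step ((a + j*m : ℕ):ℝ) (m:ℝ) hA1 (by exact_mod_cast hm0)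
    rw [← hcast] at this
    exact this
  have hsumc : ∑ j ∈ range (K+1), c j ≤ c 0 + 2 / m * g 0 := by
    rw [Finset.sum_range_succ']
    have h1 : ∑ j ∈ range K, c (j+1) ≤ ∑ j ∈ range K, (2 / m * (g j - g (j+1))) :=
      Finset.sum_le_sum fun j _ => htel j
    rw [← Finset.mul_sum, Finset.sum_range_sub'] at h1
    have hgK : 0 ≤ g K := by positivity
    have hm' : (0:ℝ) < m := by exact_mod_cast hm0
    have : ∑ j ∈ range K, c (j+1) ≤ 2 / m * g 0 := by
      refine h1.trans ?_
      have : 2 / (m:ℝ) * (g 0 - g K) ≤ 2 / m * g 0 := by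
        apply mul_le_mul_of_nonneg_left _ (by positivity)
        linarith
      exact this
    linarith
  -- combine
  have htotal : ∑ n ∈ F, f n ≤ (m.totient : ℝ) * (c 0 + 2 / m * g 0) := by
    rw [hfib]
    calc ∑ j ∈ range (K+1), ∑ n ∈ F.filter (fun n => (n - a) / m = j), f n
        ≤ ∑ j ∈ range (K+1), (m.totient : ℝ) * c j := Finset.sum_le_sum fun j _ => hinner j
      _ = (m.totient : ℝ) * ∑ j ∈ range (K+1), c j := by rw [Finset.mul_sum]
      _ ≤ (m.totient : ℝ) * (c 0 + 2 / m * g 0) := by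
          apply mul_le_mul_of_nonneg_left hsumc (by positivity)
  -- final numeric bound
  have ha0 : (0:ℝ) < (a:ℝ) := by exact_mod_cast ha1
  have hsa : Real.sqrt s ≤ Real.sqrt a := Real.sqrt_le_sqrt has
  have hsqa : 0 < Real.sqrt (a:ℝ) := Real.sqrt_pos.mpr ha0
  have hsqs : 0 < Real.sqrt s := Real.sqrt_pos.mpr (by linarith)
  have hc0' : c 0 = 1 / ((a:ℝ) * Real.sqrt (a:ℝ)) := by simp [hc]
  have hg0' : g 0 = 1 / Real.sqrt (a:ℝ) := by simp [hg]
  have hm' : (0:ℝ) < m := by exact_mod_cast hm0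
  have h4 : 4 * (m.totient:ℝ) ≤ ε * a := by
    rw [div_le_iff₀ hε] at hstot
    nlinarith [has]
  have e1 : (m.totient:ℝ) * c 0 ≤ ε/4 / Real.sqrt a := by
    rw [hc0', mul_one_div, div_le_div_iff₀ (by positivity) hsqa]
    nlinarith [hsqa.le, h4]
  have e2 : (m.totient:ℝ) * (2/m * g 0) ≤ ε/2 / Real.sqrt a := by
    rw [hg0']
    have heq : (m.totient:ℝ) * (2/m * (1/Real.sqrt a)) = (2*(m.totient:ℝ)/m) * (1/Real.sqrt a) := by
      ring
    rw [heq]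
    have h5 : 2*(m.totient:ℝ)/m ≤ ε/2 := by
      rw [div_le_iff₀ hm']
      nlinarith
    calc (2*(m.totient:ℝ)/m) * (1/Real.sqrt a) ≤ (ε/2) * (1/Real.sqrt a) := by
          apply mul_le_mul_of_nonneg_right h5 (by positivity)
      _ = ε/2 / Real.sqrt a := by rw [mul_one_div]
  have h6 : 1/Real.sqrt (a:ℝ) ≤ 1/Real.sqrt s := one_div_le_one_div_of_le hsqs hsa
  calc ∑ n ∈ F, f n ≤ (m.totient : ℝ) * (c 0 + 2 / m * g 0) := htotal
    _ = (m.totient : ℝ) * c 0 + (m.totient : ℝ) * (2/m * g 0) := by ring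
    _ ≤ ε/4 / Real.sqrt a + ε/2 / Real.sqrt a := add_le_add e1 e2
    _ = (3*ε/4) * (1/Real.sqrt a) := by ring
    _ ≤ (3*ε/4) * (1/Real.sqrt s) := by
        apply mul_le_mul_of_nonneg_left h6 (by positivity)
    _ ≤ ε / Real.sqrt s := by
        rw [mul_one_div]
        gcongr
        linarith


lemma not_mem_pf_of_exact {p k v w : ℕ} (hp : p.Prime) (hv : 0 < v) (hw : 0 < w)
    (h1 : p ^ k ∣ v) (h2 : ¬ p ^ (k+1) ∣ v) (h3 : p ^ k ∣ w) (h4 : ¬ p ^ (k+1) ∣ w) :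
    p ∉ (v * w / Nat.gcd v w ^ 2).primeFactors := by
  intro hmem
  have hv0 : v ≠ 0 := hv.ne'
  have hw0 : w ≠ 0 := hw.ne'
  have hfv : v.factorization p = k := by
    have hle : k ≤ v.factorization p := (hp.pow_dvd_iff_le_factorization hv0).mp h1
    have hlt : ¬ (k + 1 ≤ v.factorization p) := fun h =>
      h2 ((hp.pow_dvd_iff_le_factorization hv0).mpr h)
    omega
  have hfw : w.factorization p = k := by
    have hle : k ≤ w.factorization p := (hp.pow_dvd_iff_le_factorization hw0).mp h3
    have hlt : ¬ (k + 1 ≤ w.factorization p) := fun h =>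
      h4 ((hp.pow_dvd_iff_le_factorization hw0).mpr h)
    omega
  have hgd : Nat.gcd v w ^ 2 ∣ v * w := by
    rw [sq]
    exact mul_dvd_mul (Nat.gcd_dvd_left v w) (Nat.gcd_dvd_right v w)
  have hvw0 : v * w ≠ 0 := by positivity
  have hn0 : v * w / Nat.gcd v w ^ 2 ≠ 0 := by
    have := Nat.le_of_dvd (by positivity) hgd
    have hg0 : 0 < Nat.gcd v w ^ 2 := by
      have := Nat.gcd_pos_of_pos_left w hv
      positivity
    exact (Nat.div_pos this hg0).ne'
  obtain ⟨-, hdvd, -⟩ := Nat.mem_primeFactors.mp hmem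
  have h1le : 1 ≤ (v * w / Nat.gcd v w ^ 2).factorization p :=
    (hp.dvd_iff_one_le_factorization hn0).mp hdvd
  rw [Nat.factorization_div hgd] at h1le
  rw [Finsupp.tsub_apply, Nat.factorization_mul hv0 hw0, Nat.factorization_pow,
    Nat.factorization_gcd hv0 hw0, Finsupp.add_apply, Finsupp.smul_apply,
    Finsupp.inf_apply, hfv, hfw] at h1le
  simp only [smul_eq_mul, min_self] at h1le
  omega


set_option maxHeartbeats 1000000 in
theorem remove_large_R_primes :
    ∃ s₀ : ℝ, ∀ s : ℝ, 1 ≤ s → s₀ ≤ s →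
      ∀ G : GCDGraph,
        1 / s ^ ((1 : ℝ) / 4) ≤ G.density →
        G.RSharp = ∅ →
        (∀ e ∈ G.E, 1 / s ^ ((1 : ℝ) / 4) ≤ Lfun s e.1 e.2) →
        ∃ G' : GCDGraph, G'.IsSubgraph G ∧
          G'.V = G.V ∧ G'.W = G.W ∧ G'.P = G.P ∧ G'.f = G.f ∧ G'.g = G.g ∧
          G.quality / 2 ≤ G'.quality ∧
          ∀ e ∈ G'.E,
            3 / (4 * s ^ ((1 : ℝ) / 4)) ≤
              ∑ p ∈ (e.1 * e.2 / Nat.gcd e.1 e.2 ^ 2).primeFactors,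
                Set.indicator {p : ℕ | s ≤ (p : ℝ) ∧ p ∉ G.RSet}
                  (fun p : ℕ => 1 / (p : ℝ)) p := by
  classical
  obtain ⟨s₀, hs₀1, hA2⟩ := prime_tail_sum (1/200) (by norm_num)
  refine ⟨s₀, fun s hs1 hss₀ G hδ hRS hL => ?_⟩
  set θ := s ^ ((1:ℝ)/4) with hθ
  have hspos : (0:ℝ) < s := by linarith
  have hθpos : 0 < θ := Real.rpow_pos_of_pos hspos _
  have hδpos : 0 < G.density := lt_of_lt_of_le (by positivity) hδ
  have hV0 : 0 ≤ G.muV := Finset.sum_nonneg fun v _ => G.mu_nonneg v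
  have hW0 : 0 ≤ G.muW := Finset.sum_nonneg fun w _ => G.mu_nonneg w
  have hVW : 0 < G.muV * G.muW := by
    rcases lt_or_eq_of_le (mul_nonneg hV0 hW0) with h | h
    · exact h
    · rw [GCDGraph.density, ← h, div_zero] at hδpos
      exact absurd hδpos (lt_irrefl 0)
  have hV : 0 < G.muV := by
    rcases lt_or_eq_of_le hV0 with h | h
    · exact h
    · rw [← h, zero_mul] at hVW; exact absurd hVW (lt_irrefl 0)
  have hW : 0 < G.muW := by
    rcases lt_or_eq_of_le hW0 with h | h
    · exact h
    · rw [← h, mul_zero] at hVW; exact absurd hVW (lt_irrefl 0)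
  have hsq : Real.sqrt s = θ ^ 2 := by
    rw [Real.sqrt_eq_rpow, hθ, ← Real.rpow_natCast (s ^ ((1:ℝ)/4)) 2,
      ← Real.rpow_mul hspos.le]
    norm_num
  -- notation
  set M := G.muV * G.muW with hM
  set PF : ℕ × ℕ → Finset ℕ := fun e => (e.1 * e.2 / Nat.gcd e.1 e.2 ^ 2).primeFactors with hPF
  set r : ℕ → ℝ := fun p => if s ≤ (p:ℝ) ∧ p ∈ G.RSet then 1/(p:ℝ) else 0 with hr
  have hr0 : ∀ p, 0 ≤ r p := by
    intro p; rw [hr]; dsimp only; split_ifs; · positivity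
    · exact le_refl 0
  set Rc : ℕ × ℕ → ℝ := fun e => ∑ p ∈ PF e, r p with hRc
  have hRc0 : ∀ e, 0 ≤ Rc e := fun e => Finset.sum_nonneg fun p _ => hr0 p
  -- per-prime bound
  have keyprime : ∀ p : ℕ, p.Prime → p ∈ G.RSet →
      ∑ e ∈ G.E.filter (fun e => p ∈ PF e), G.mu e.1 * G.mu e.2 ≤
        2 / Real.sqrt p * M := by
    intro p hp hpR
    have hsp : 0 < Real.sqrt p := Real.sqrt_pos.mpr (by exact_mod_cast hp.pos)
    have hnot : ¬ (p ∈ G.RSet ∧ ∀ k : ℕ,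
        min (G.muVpk p k / G.muV) (G.muWpk p k / G.muW) ≤ 1 - 1 / Real.sqrt p) := by
      intro hmem
      have hx : p ∈ G.RSharp := hmem
      rw [hRS] at hx
      exact hx
    push_neg at hnot
    obtain ⟨k, hk⟩ := hnot hpR
    have hVk : (1 - 1/Real.sqrt p) * G.muV ≤ G.muVpk p k := by
      have h1 := (lt_min_iff.mp hk).1
      rw [lt_div_iff₀ hV] at h1
      linarith
    have hWk : (1 - 1/Real.sqrt p) * G.muW ≤ G.muWpk p k := by
      have h1 := (lt_min_iff.mp hk).2
      rw [lt_div_iff₀ hW] at h1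
      linarith
    -- decompose
    set S := G.E.filter (fun e => p ∈ PF e) with hS
    set S1 := G.E.filter (fun e => ¬ (p ^ k ∣ e.1 ∧ ¬ p ^ (k+1) ∣ e.1)) with hS1
    set S2 := G.E.filter (fun e => ¬ (p ^ k ∣ e.2 ∧ ¬ p ^ (k+1) ∣ e.2)) with hS2
    have hsub : S ⊆ S1 ∪ S2 := by
      intro e he
      obtain ⟨heE, hePF⟩ := Finset.mem_filter.mp he
      obtain ⟨heV, heW⟩ := Finset.mem_product.mp (G.E_sub heE)
      have hv := G.V_pos e.1 heV
      have hw := G.W_pos e.2 heW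
      by_cases h1 : p ^ k ∣ e.1 ∧ ¬ p ^ (k+1) ∣ e.1
      · by_cases h2 : p ^ k ∣ e.2 ∧ ¬ p ^ (k+1) ∣ e.2
        · exact absurd hePF (not_mem_pf_of_exact hp hv hw h1.1 h1.2 h2.1 h2.2)
        · exact Finset.mem_union_right _ (Finset.mem_filter.mpr ⟨heE, h2⟩)
      · exact Finset.mem_union_left _ (Finset.mem_filter.mpr ⟨heE, h1⟩)
    have hwnn : ∀ e : ℕ × ℕ, 0 ≤ G.mu e.1 * G.mu e.2 :=
      fun e => mul_nonneg (G.mu_nonneg _) (G.mu_nonneg _)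
    have hsplit : ∑ e ∈ S, G.mu e.1 * G.mu e.2 ≤
        (∑ e ∈ S1, G.mu e.1 * G.mu e.2) + ∑ e ∈ S2, G.mu e.1 * G.mu e.2 := by
      have h1 : ∑ e ∈ S, G.mu e.1 * G.mu e.2 ≤ ∑ e ∈ S1 ∪ S2, G.mu e.1 * G.mu e.2 :=
        Finset.sum_le_sum_of_subset_of_nonneg hsub (fun e _ _ => hwnn e)
      have h2 : ∑ e ∈ S1 ∪ S2, G.mu e.1 * G.mu e.2
          = (∑ e ∈ S1, G.mu e.1 * G.mu e.2) + ∑ e ∈ S2 \ S1, G.mu e.1 * G.mu e.2 := by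
        rw [← Finset.union_sdiff_self_eq_union]
        exact Finset.sum_union Finset.disjoint_sdiff
      have h3 : ∑ e ∈ S2 \ S1, G.mu e.1 * G.mu e.2 ≤ ∑ e ∈ S2, G.mu e.1 * G.mu e.2 :=
        Finset.sum_le_sum_of_subset_of_nonneg (Finset.sdiff_subset) (fun e _ _ => hwnn e)
      linarith
    -- bound S1
    have hprod : ∀ A : Finset ℕ, ∑ e ∈ A ×ˢ G.W, G.mu e.1 * G.mu e.2
        = (∑ v ∈ A, G.mu v) * G.muW := by
      intro A
      rw [Finset.sum_product]
      simp_rw [← Finset.mul_sum]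
      rw [← Finset.sum_mul]
      rfl
    have hprod2 : ∀ A : Finset ℕ, ∑ e ∈ G.V ×ˢ A, G.mu e.1 * G.mu e.2
        = G.muV * ∑ w ∈ A, G.mu w := by
      intro A
      rw [Finset.sum_product]
      simp_rw [← Finset.mul_sum]
      rw [← Finset.sum_mul]
      rfl
    have hfiltV : ∑ v ∈ G.V.filter (fun v => ¬ (p ^ k ∣ v ∧ ¬ p ^ (k+1) ∣ v)), G.mu v
        = G.muV - G.muVpk p k := by
      have h := Finset.sum_filter_add_sum_filter_not G.V
        (fun v => p ^ k ∣ v ∧ ¬ p ^ (k+1) ∣ v) G.mu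
      have h2 : G.muVpk p k =
          ∑ v ∈ G.V.filter (fun v => p ^ k ∣ v ∧ ¬ p ^ (k+1) ∣ v), G.mu v := rfl
      rw [h2]
      rw [GCDGraph.muV]
      linarith
    have hfiltW : ∑ w ∈ G.W.filter (fun w => ¬ (p ^ k ∣ w ∧ ¬ p ^ (k+1) ∣ w)), G.mu w
        = G.muW - G.muWpk p k := by
      have h := Finset.sum_filter_add_sum_filter_not G.W
        (fun w => p ^ k ∣ w ∧ ¬ p ^ (k+1) ∣ w) G.mu
      have h2 : G.muWpk p k =
          ∑ w ∈ G.W.filter (fun w => p ^ k ∣ w ∧ ¬ p ^ (k+1) ∣ w), G.mu w := rfl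
      rw [h2]
      rw [GCDGraph.muW]
      linarith
    have hb1 : ∑ e ∈ S1, G.mu e.1 * G.mu e.2 ≤ (1/Real.sqrt p) * G.muV * G.muW := by
      have hsub1 : S1 ⊆ (G.V.filter (fun v => ¬ (p ^ k ∣ v ∧ ¬ p ^ (k+1) ∣ v))) ×ˢ G.W := by
        intro e he
        obtain ⟨heE, hcond⟩ := Finset.mem_filter.mp he
        obtain ⟨heV, heW⟩ := Finset.mem_product.mp (G.E_sub heE)
        exact Finset.mem_product.mpr ⟨Finset.mem_filter.mpr ⟨heV, hcond⟩, heW⟩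
      calc ∑ e ∈ S1, G.mu e.1 * G.mu e.2
          ≤ ∑ e ∈ (G.V.filter (fun v => ¬ (p ^ k ∣ v ∧ ¬ p ^ (k+1) ∣ v))) ×ˢ G.W,
              G.mu e.1 * G.mu e.2 :=
            Finset.sum_le_sum_of_subset_of_nonneg hsub1 (fun e _ _ => hwnn e)
        _ = (G.muV - G.muVpk p k) * G.muW := by rw [hprod, hfiltV]
        _ ≤ ((1/Real.sqrt p) * G.muV) * G.muW := by
            apply mul_le_mul_of_nonneg_right _ hW0
            nlinarith
        _ = (1/Real.sqrt p) * G.muV * G.muW := by ring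
    have hb2 : ∑ e ∈ S2, G.mu e.1 * G.mu e.2 ≤ G.muV * ((1/Real.sqrt p) * G.muW) := by
      have hsub2 : S2 ⊆ G.V ×ˢ (G.W.filter (fun w => ¬ (p ^ k ∣ w ∧ ¬ p ^ (k+1) ∣ w))) := by
        intro e he
        obtain ⟨heE, hcond⟩ := Finset.mem_filter.mp he
        obtain ⟨heV, heW⟩ := Finset.mem_product.mp (G.E_sub heE)
        exact Finset.mem_product.mpr ⟨heV, Finset.mem_filter.mpr ⟨heW, hcond⟩⟩
      calc ∑ e ∈ S2, G.mu e.1 * G.mu e.2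
          ≤ ∑ e ∈ G.V ×ˢ (G.W.filter (fun w => ¬ (p ^ k ∣ w ∧ ¬ p ^ (k+1) ∣ w))),
              G.mu e.1 * G.mu e.2 :=
            Finset.sum_le_sum_of_subset_of_nonneg hsub2 (fun e _ _ => hwnn e)
        _ = G.muV * (G.muW - G.muWpk p k) := by rw [hprod2, hfiltW]
        _ ≤ G.muV * ((1/Real.sqrt p) * G.muW) := by
            apply mul_le_mul_of_nonneg_left _ hV0
            nlinarith
    calc ∑ e ∈ S, G.mu e.1 * G.mu e.2
        ≤ (∑ e ∈ S1, G.mu e.1 * G.mu e.2) + ∑ e ∈ S2, G.mu e.1 * G.mu e.2 := hsplit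
      _ ≤ (1/Real.sqrt p) * G.muV * G.muW + G.muV * ((1/Real.sqrt p) * G.muW) :=
          add_le_add hb1 hb2
      _ = 2 / Real.sqrt p * M := by rw [hM]; ring
  -- total weighted sum bound
  set U := G.E.biUnion PF with hU
  have hRcU : ∀ e ∈ G.E, Rc e = ∑ p ∈ U, if p ∈ PF e then r p else 0 := by
    intro e he
    rw [Finset.sum_ite_mem, Finset.inter_eq_right.mpr (fun p hp =>
      Finset.mem_biUnion.mpr ⟨e, he, hp⟩)]
  have hswap : ∑ e ∈ G.E, (G.mu e.1 * G.mu e.2) * Rc e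
      = ∑ p ∈ U, r p * ∑ e ∈ G.E.filter (fun e => p ∈ PF e), G.mu e.1 * G.mu e.2 := by
    calc ∑ e ∈ G.E, (G.mu e.1 * G.mu e.2) * Rc e
        = ∑ e ∈ G.E, ∑ p ∈ U, (if p ∈ PF e then (G.mu e.1 * G.mu e.2) * r p else 0) := by
          refine Finset.sum_congr rfl fun e he => ?_
          rw [hRcU e he, Finset.mul_sum]
          refine Finset.sum_congr rfl fun p _ => ?_
          rw [mul_ite, mul_zero]
      _ = ∑ p ∈ U, ∑ e ∈ G.E, (if p ∈ PF e then (G.mu e.1 * G.mu e.2) * r p else 0) :=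
          Finset.sum_comm
      _ = ∑ p ∈ U, ∑ e ∈ G.E.filter (fun e => p ∈ PF e), (G.mu e.1 * G.mu e.2) * r p := by
          refine Finset.sum_congr rfl fun p _ => (Finset.sum_filter _ _).symm
      _ = ∑ p ∈ U, r p * ∑ e ∈ G.E.filter (fun e => p ∈ PF e), G.mu e.1 * G.mu e.2 := by
          refine Finset.sum_congr rfl fun p _ => ?_
          rw [← Finset.sum_mul, mul_comm]
  have hterm : ∀ p ∈ U, r p * (∑ e ∈ G.E.filter (fun e => p ∈ PF e), G.mu e.1 * G.mu e.2)
      ≤ (if p.Prime ∧ s ≤ (p:ℝ) then 1/((p:ℝ) * Real.sqrt p) * (2 * M) else 0) := by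
    intro p _
    by_cases hc : s ≤ (p:ℝ) ∧ p ∈ G.RSet
    · have hp : p.Prime := hc.2.1
      have hrp : r p = 1/(p:ℝ) := by rw [hr]; exact if_pos hc
      rw [if_pos ⟨hp, hc.1⟩, hrp]
      have hkey := keyprime p hp hc.2
      have hppos : (0:ℝ) < p := by exact_mod_cast hp.pos
      have hsp : 0 < Real.sqrt p := Real.sqrt_pos.mpr hppos
      calc 1/(p:ℝ) * ∑ e ∈ G.E.filter (fun e => p ∈ PF e), G.mu e.1 * G.mu e.2
          ≤ 1/(p:ℝ) * (2 / Real.sqrt p * M) := by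
            apply mul_le_mul_of_nonneg_left hkey (by positivity)
        _ = 1/((p:ℝ) * Real.sqrt p) * (2 * M) := by
            field_simp
    · have hrp : r p = 0 := by rw [hr]; exact if_neg hc
      rw [hrp, zero_mul]
      split_ifs with h
      · have hppos : (0:ℝ) < p := by exact_mod_cast h.1.pos
        have hM0 : (0:ℝ) ≤ M := hVW.le
        positivity
      · exact le_refl 0
  have hSig : ∑ e ∈ G.E, (G.mu e.1 * G.mu e.2) * Rc e ≤ (1/200) / Real.sqrt s * (2 * M) := by
    rw [hswap]
    calc ∑ p ∈ U, r p * ∑ e ∈ G.E.filter (fun e => p ∈ PF e), G.mu e.1 * G.mu e.2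
        ≤ ∑ p ∈ U, (if Nat.Prime p ∧ s ≤ (p:ℝ) then 1/((p:ℝ) * Real.sqrt p) * (2 * M) else 0) :=
          Finset.sum_le_sum hterm
      _ = ∑ p ∈ U.filter (fun p => Nat.Prime p ∧ s ≤ (p:ℝ)), 1/((p:ℝ) * Real.sqrt p) * (2 * M) :=
          (Finset.sum_filter _ _).symm
      _ = (∑ p ∈ U.filter (fun p => Nat.Prime p ∧ s ≤ (p:ℝ)), 1/((p:ℝ) * Real.sqrt p)) * (2 * M) :=
          (Finset.sum_mul _ _ _).symm
      _ ≤ (1/200) / Real.sqrt s * (2 * M) := by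
          apply mul_le_mul_of_nonneg_right _ (by nlinarith)
          exact hA2 s hss₀ _ (fun p hp => (Finset.mem_filter.mp hp).2)
  -- the subgraph
  set E' := G.E.filter (fun e => Rc e ≤ 1/(4*θ)) with hE'
  set Ebad := G.E.filter (fun e => ¬ (Rc e ≤ 1/(4*θ))) with hEbad
  have hEsplit : (∑ e ∈ E', G.mu e.1 * G.mu e.2) + ∑ e ∈ Ebad, G.mu e.1 * G.mu e.2
      = G.muE := by
    rw [hE', hEbad, GCDGraph.muE]
    exact Finset.sum_filter_add_sum_filter_not _ _ _
  have hwnn : ∀ e : ℕ × ℕ, 0 ≤ G.mu e.1 * G.mu e.2 :=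
    fun e => mul_nonneg (G.mu_nonneg _) (G.mu_nonneg _)
  have hbad : ∑ e ∈ Ebad, G.mu e.1 * G.mu e.2 ≤ (1/25) * (M / θ) := by
    have hmark : (1/(4*θ)) * ∑ e ∈ Ebad, G.mu e.1 * G.mu e.2
        ≤ ∑ e ∈ G.E, (G.mu e.1 * G.mu e.2) * Rc e := by
      calc (1/(4*θ)) * ∑ e ∈ Ebad, G.mu e.1 * G.mu e.2
          = ∑ e ∈ Ebad, (G.mu e.1 * G.mu e.2) * (1/(4*θ)) := by
            rw [Finset.mul_sum]
            exact Finset.sum_congr rfl fun e _ => by ring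
        _ ≤ ∑ e ∈ Ebad, (G.mu e.1 * G.mu e.2) * Rc e := by
            refine Finset.sum_le_sum fun e he => ?_
            have hgt := (Finset.mem_filter.mp he).2
            push_neg at hgt
            exact mul_le_mul_of_nonneg_left hgt.le (hwnn e)
        _ ≤ ∑ e ∈ G.E, (G.mu e.1 * G.mu e.2) * Rc e := by
            apply Finset.sum_le_sum_of_subset_of_nonneg (Finset.filter_subset _ _)
            exact fun e _ _ => mul_nonneg (hwnn e) (hRc0 e)
    have h1 : (1/(4*θ)) * ∑ e ∈ Ebad, G.mu e.1 * G.mu e.2 ≤ (1/200) / Real.sqrt s * (2 * M) :=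
      le_trans hmark hSig
    rw [hsq] at h1
    have hθ2 : (0:ℝ) < θ^2 := by positivity
    have hexp : (1/200) / θ^2 * (2 * M) = (1/100) * (M / θ^2) := by ring
    rw [hexp] at h1
    -- from (1/(4θ)) * X ≤ (1/100) M/θ² conclude X ≤ (1/25) M/θ
    have h4 : ∑ e ∈ Ebad, G.mu e.1 * G.mu e.2 ≤ 4*θ * ((1/100) * (M/θ^2)) := by
      have h5 := mul_le_mul_of_nonneg_left h1 (le_of_lt (by positivity : (0:ℝ) < 4*θ))
      calc ∑ e ∈ Ebad, G.mu e.1 * G.mu e.2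
          = 4*θ*((1/(4*θ)) * ∑ e ∈ Ebad, G.mu e.1 * G.mu e.2) := by
            field_simp
        _ ≤ 4*θ*((1/100)*(M/θ^2)) := h5
    have h6 : 4*θ*((1/100)*(M/θ^2)) = (1/25)*(M/θ) := by
      field_simp
      ring
    linarith
  have hmuE : M / θ ≤ G.muE := by
    have := hδ
    rw [GCDGraph.density, ← hM] at this
    rw [le_div_iff₀ hVW] at this
    calc M / θ = 1/θ * M := by ring
      _ ≤ G.muE := this
  have hmuE' : (24/25) * G.muE ≤ ∑ e ∈ E', G.mu e.1 * G.mu e.2 := by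
    have h2 : ∑ e ∈ Ebad, G.mu e.1 * G.mu e.2 ≤ (1/25) * G.muE := by
      calc ∑ e ∈ Ebad, G.mu e.1 * G.mu e.2 ≤ (1/25) * (M / θ) := hbad
        _ ≤ (1/25) * G.muE := by linarith
    linarith
  -- construct G'
  set G' : GCDGraph := { G with
    E := E'
    E_sub := (Finset.filter_subset _ _).trans G.E_sub
    exact_gcd := fun p hp e he => G.exact_gcd p hp e (Finset.filter_subset _ _ he) } with hG'
  refine ⟨G',
    ⟨rfl, le_refl _, le_refl _, Finset.filter_subset _ _, le_refl _, fun p _ => ⟨rfl, rfl⟩⟩,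
    rfl, rfl, rfl, rfl, rfl, ?_, ?_⟩
  · -- quality
    set Q := ∏ p ∈ G.P, ((p : ℝ) ^ (max (G.f p) (G.g p) - min (G.f p) (G.g p)) /
      ((1 - (if G.f p = G.g p ∧ 1 ≤ G.f p then 1 / (p : ℝ) else 0)) ^ 2 *
        (1 - (p : ℝ) ^ (-(31 : ℝ) / 30)) ^ 10)) with hQ
    have hQ0 : 0 ≤ Q := by
      rw [hQ]
      refine Finset.prod_nonneg fun p _ => div_nonneg (by positivity) ?_
      exact mul_nonneg (sq_nonneg _) (Even.pow_nonneg ⟨5, rfl⟩ _)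
    have hd' : G'.density = (∑ e ∈ E', G.mu e.1 * G.mu e.2) / M := rfl
    have hd : G.density = G.muE / M := rfl
    have hdle : (24/25) * G.density ≤ G'.density := by
      rw [hd, hd']
      calc (24/25) * (G.muE / M) = ((24/25) * G.muE) / M := by ring
        _ ≤ (∑ e ∈ E', G.mu e.1 * G.mu e.2) / M := by
            gcongr
    have hd'0 : (0:ℝ) ≤ (24/25) * G.density := by positivity
    have hpow : ((24/25) * G.density) ^ 10 ≤ G'.density ^ 10 :=
      pow_le_pow_left₀ hd'0 hdle 10
    have h10 : G.density ^ 10 / 2 ≤ G'.density ^ 10 := by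
      have hx : (0:ℝ) ≤ G.density ^ 10 := pow_nonneg hδpos.le 10
      have hcon : (1/2 : ℝ) ≤ ((24:ℝ)/25) ^ 10 := by norm_num
      have hhalf := mul_le_mul_of_nonneg_right hcon hx
      have hmp : ((24:ℝ)/25) ^ 10 * G.density ^ 10 = ((24/25) * G.density) ^ 10 :=
        (mul_pow _ _ 10).symm
      linarith
    have hqG : G.quality = G.density ^ 10 * G.muV * G.muW * Q := rfl
    have hqG' : G'.quality = G'.density ^ 10 * G.muV * G.muW * Q := rfl
    rw [hqG, hqG']
    have hmm : (0:ℝ) ≤ G.muV * G.muW * Q := mul_nonneg (mul_nonneg hV0 hW0) hQ0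
    calc G.density ^ 10 * G.muV * G.muW * Q / 2
        = (G.density ^ 10 / 2) * (G.muV * G.muW * Q) := by ring
      _ ≤ (G'.density ^ 10) * (G.muV * G.muW * Q) :=
          mul_le_mul_of_nonneg_right h10 hmm
      _ = G'.density ^ 10 * G.muV * G.muW * Q := by ring
  · -- edge property
    intro e he
    have he' : e ∈ E' := he
    have heE : e ∈ G.E := (Finset.mem_filter.mp he').1
    have heRc : Rc e ≤ 1/(4*θ) := (Finset.mem_filter.mp he').2
    have hLe := hL e heE
    have key : ∀ p : ℕ, Set.indicator {p : ℕ | s ≤ (p:ℝ) ∧ p ∉ G.RSet}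
        (fun p : ℕ => 1 / (p : ℝ)) p
        = (if s ≤ (p:ℝ) then 1/(p:ℝ) else 0) - r p := by
      intro p
      simp only [Set.indicator_apply, Set.mem_setOf_eq, hr]
      by_cases h1 : s ≤ (p:ℝ)
      · by_cases h2 : p ∈ G.RSet
        · rw [if_neg (fun hm => hm.2 h2), if_pos h1, if_pos ⟨h1, h2⟩]; ring
        · rw [if_pos ⟨h1, h2⟩, if_pos h1, if_neg (fun hc => h2 hc.2)]; ring
      · rw [if_neg (fun hm => h1 hm.1), if_neg h1, if_neg (fun hc => h1 hc.1)]; ring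
    have hsum : ∑ p ∈ PF e, Set.indicator {p : ℕ | s ≤ (p:ℝ) ∧ p ∉ G.RSet}
        (fun p : ℕ => 1 / (p : ℝ)) p = Lfun s e.1 e.2 - Rc e := by
      refine (Finset.sum_congr rfl fun p _ => key p).trans ?_
      rw [Finset.sum_sub_distrib]
      rfl
    have h34 : 1/θ - 1/(4*θ) = 3/(4*θ) := by
      field_simp
      ring
    have hgoal : 3/(4*θ) ≤ ∑ p ∈ PF e, Set.indicator {p : ℕ | s ≤ (p:ℝ) ∧ p ∉ G.RSet}
        (fun p : ℕ => 1 / (p : ℝ)) p := by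
      rw [hsum]
      linarith
    exact hgoal
end

section
/- Let G = (μ,𝒱,𝒲,ℰ,𝒫,f,g) be a GCD graph with δ(G) > 0, let p ∈ ℛ(G), and set α_k = μ(𝒱_{p^k})/μ(𝒱) and β_l = μ(𝒲_{p^l})/μ(𝒲). Then there exists a pair of non-negative integers (k,l) with α_k > 0 and β_l > 0 such that: if k = l then μ(ℰ_{p^k,p^l})/μ(ℰ) ≥ (α_k β_k)^{9/10}; and if k ≠ l then μ(ℰ_{p^k,p^l})/μ(ℰ) ≥ (α_k(1−β_k) + β_k(1−α_k) + α_l(1−β_l) + β_l(1−α_l)) / (40(k−l)²). -/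
open Finset

open GCDGraph

private lemma sum_inv_sq_le' (n : ℕ) :
    ∑ i ∈ Finset.range n, (1:ℝ)/((i:ℝ)+1)^2 ≤ 2 - 2/((n:ℝ)+1) := by
  induction n with
  | zero => norm_num
  | succ n ih =>
    rw [Finset.sum_range_succ]
    have h1 : (0:ℝ) < (n:ℝ)+1 := by positivity
    have h2 : (0:ℝ) < (n:ℝ)+2 := by positivity
    have key : (1:ℝ)/((n:ℝ)+1)^2 ≤ 2/((n:ℝ)+1) - 2/((n:ℝ)+2) := by
      rw [div_sub_div _ _ (ne_of_gt h1) (ne_of_gt h2), div_le_div_iff₀ (by positivity) (by positivity)]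
      nlinarith
    push_cast
    have : ((n:ℝ)+1)+1 = (n:ℝ)+2 := by ring
    rw [this]
    linarith

private lemma sum_inv_dist_sq_le' (k N : ℕ) :
    ∑ l ∈ (Finset.range N).erase k, (1:ℝ)/(((k:ℝ))-(l:ℝ))^2 ≤ 4 := by
  have hsub : (Finset.range N).erase k ⊆ Finset.range k ∪ Finset.Ico (k+1) (k+1+N) := by
    intro l hl
    simp only [Finset.mem_erase, Finset.mem_range] at hl
    simp only [Finset.mem_union, Finset.mem_range, Finset.mem_Ico]
    omega
  refine le_trans (Finset.sum_le_sum_of_subset_of_nonneg hsub (fun l _ _ => by positivity)) ?_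
  rw [Finset.sum_union (by
    rw [Finset.disjoint_left]
    intro l hl hl'
    simp only [Finset.mem_range] at hl
    simp only [Finset.mem_Ico] at hl'
    omega)]
  have h1 : ∑ l ∈ Finset.range k, (1:ℝ)/(((k:ℝ))-(l:ℝ))^2 ≤ 2 := by
    rw [← Finset.sum_range_reflect]
    have hc : ∀ i ∈ Finset.range k, (1:ℝ)/(((k:ℝ))-(((k-1-i : ℕ)):ℝ))^2 = 1/((i:ℝ)+1)^2 := by
      intro i hi
      simp only [Finset.mem_range] at hi
      have he : ((k-1-i : ℕ):ℝ) = (k:ℝ) - ((i:ℝ)+1) := by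
        have h' : k - 1 - i = k - (i+1) := by omega
        rw [h', Nat.cast_sub (by omega)]
        push_cast
        ring
      rw [he]
      ring_nf
    rw [Finset.sum_congr rfl hc]
    have := sum_inv_sq_le' k
    have h2 : (0:ℝ) ≤ 2/((k:ℝ)+1) := by positivity
    linarith
  have h2 : ∑ l ∈ Finset.Ico (k+1) (k+1+N), (1:ℝ)/(((k:ℝ))-(l:ℝ))^2 ≤ 2 := by
    rw [Finset.sum_Ico_eq_sum_range]
    have hc : ∀ i ∈ Finset.range (k+1+N-(k+1)), (1:ℝ)/(((k:ℝ))-(((k+1+i : ℕ)):ℝ))^2 = 1/((i:ℝ)+1)^2 := by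
      intro i _
      push_cast
      ring_nf
    rw [Finset.sum_congr rfl hc]
    have h' : k+1+N-(k+1) = N := by omega
    rw [h']
    have := sum_inv_sq_le' N
    have h2 : (0:ℝ) ≤ 2/((N:ℝ)+1) := by positivity
    linarith
  linarith

private lemma sum_erase_swap' (N : ℕ) (f : ℕ → ℕ → ℝ) :
    ∑ k ∈ Finset.range N, ∑ l ∈ (Finset.range N).erase k, f k l
      = ∑ k ∈ Finset.range N, ∑ l ∈ (Finset.range N).erase k, f l k := by
  rw [Finset.sum_sigma', Finset.sum_sigma']
  refine Finset.sum_nbij' (fun q => ⟨q.2, q.1⟩) (fun q => ⟨q.2, q.1⟩) ?_ ?_ ?_ ?_ ?_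
  · rintro ⟨a, b⟩ hab
    simp only [Finset.mem_sigma, Finset.mem_erase, Finset.mem_range] at hab ⊢
    omega
  · rintro ⟨a, b⟩ hab
    simp only [Finset.mem_sigma, Finset.mem_erase, Finset.mem_range] at hab ⊢
    omega
  · rintro ⟨a, b⟩ _; rfl
  · rintro ⟨a, b⟩ _; rfl
  · rintro ⟨a, b⟩ _; rfl

private lemma analytic_core' (N : ℕ) (a b : ℕ → ℝ)
    (ha0 : ∀ k, 0 ≤ a k) (ha1 : ∀ k, a k ≤ 1)
    (hb0 : ∀ k, 0 ≤ b k) (hb1 : ∀ k, b k ≤ 1)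
    (hsa : ∑ k ∈ Finset.range N, a k = 1)
    (hsb : ∑ k ∈ Finset.range N, b k = 1) :
    ∑ q ∈ Finset.range N ×ˢ Finset.range N,
      (if q.1 = q.2 then (a q.1 * b q.1) ^ ((9:ℝ)/10)
        else (a q.1 * (1 - b q.1) + b q.1 * (1 - a q.1) +
              a q.2 * (1 - b q.2) + b q.2 * (1 - a q.2)) /
          (40 * ((q.1:ℝ) - (q.2:ℝ)) ^ 2)) ≤ 1 := by
  have hN : (Finset.range N).Nonempty := by
    rcases Nat.eq_zero_or_pos N with rfl | hpos
    · simp at hsa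
    · exact Finset.nonempty_range_iff.mpr hpos.ne'
  set x : ℕ → ℝ := fun k => Real.sqrt (a k * b k) with hxdef
  set M : ℝ := (Finset.range N).sup' hN x with hMdef
  obtain ⟨k₀, hk₀, hMk⟩ := Finset.exists_mem_eq_sup' hN x
  rw [← hMdef] at hMk
  have hx0 : ∀ k, 0 ≤ x k := fun k => Real.sqrt_nonneg _
  have hM0 : 0 ≤ M := by rw [hMk]; exact hx0 k₀
  have hx1 : ∀ k, x k ≤ 1 := by
    intro k
    have : x k ≤ Real.sqrt 1 :=
      Real.sqrt_le_sqrt (by nlinarith [ha0 k, ha1 k, hb0 k, hb1 k])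
    simpa using this
  have hM1 : M ≤ 1 := Finset.sup'_le hN x fun k _ => hx1 k
  set S : ℝ := ∑ k ∈ Finset.range N, a k * b k with hSdef
  have hMS : M^2 ≤ S := by
    rw [hMk]
    have hxx : x k₀ ^ 2 = a k₀ * b k₀ := Real.sq_sqrt (mul_nonneg (ha0 k₀) (hb0 k₀))
    rw [hxx, hSdef]
    exact Finset.single_le_sum (fun k _ => mul_nonneg (ha0 k) (hb0 k)) hk₀
  have hxM : ∀ k ∈ Finset.range N, x k ≤ M := fun k hk => Finset.le_sup' x hk
  -- Cauchy-Schwarz: sum of x ≤ 1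
  have hxsum : ∑ k ∈ Finset.range N, x k ≤ 1 := by
    have hcs := Finset.sum_mul_sq_le_sq_mul_sq (Finset.range N)
      (fun k => Real.sqrt (a k)) (fun k => Real.sqrt (b k))
    have e1 : ∑ k ∈ Finset.range N, Real.sqrt (a k) * Real.sqrt (b k)
        = ∑ k ∈ Finset.range N, x k :=
      Finset.sum_congr rfl fun k _ => (Real.sqrt_mul (ha0 k) _).symm
    have e2 : ∑ k ∈ Finset.range N, (Real.sqrt (a k))^2 = 1 := by
      rw [Finset.sum_congr rfl fun k _ => Real.sq_sqrt (ha0 k), hsa]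
    have e3 : ∑ k ∈ Finset.range N, (Real.sqrt (b k))^2 = 1 := by
      rw [Finset.sum_congr rfl fun k _ => Real.sq_sqrt (hb0 k), hsb]
    rw [e1, e2, e3, one_mul] at hcs
    nlinarith [Finset.sum_nonneg (fun k (_ : k ∈ Finset.range N) => hx0 k)]
  -- split the product sum
  rw [Finset.sum_product]
  set t : ℕ → ℝ := fun k => a k * (1 - b k) + b k * (1 - a k) with htdef
  have ht0 : ∀ k, 0 ≤ t k := fun k =>
    add_nonneg (mul_nonneg (ha0 k) (by linarith [hb1 k]))
      (mul_nonneg (hb0 k) (by linarith [ha1 k]))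
  have htsum : ∑ k ∈ Finset.range N, t k = 2 - 2*S := by
    have hc : ∀ k ∈ Finset.range N, t k = a k + b k - 2*(a k * b k) := by
      intro k _
      simp only [htdef]
      ring
    rw [Finset.sum_congr rfl hc, Finset.sum_sub_distrib, Finset.sum_add_distrib, hsa, hsb,
      ← Finset.mul_sum, ← hSdef]
    ring
  have hsplit : ∀ k ∈ Finset.range N,
      (∑ l ∈ Finset.range N,
        (if k = l then (a k * b k) ^ ((9:ℝ)/10)
          else (a k * (1 - b k) + b k * (1 - a k) +
                a l * (1 - b l) + b l * (1 - a l)) / (40 * ((k:ℝ) - (l:ℝ)) ^ 2)))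
      = (a k * b k) ^ ((9:ℝ)/10)
        + ∑ l ∈ (Finset.range N).erase k, (t k + t l) / (40 * ((k:ℝ) - (l:ℝ)) ^ 2) := by
    intro k hk
    rw [← Finset.add_sum_erase _ _ hk, if_pos rfl]
    congr 1
    refine Finset.sum_congr rfl fun l hl => ?_
    rw [if_neg (Finset.ne_of_mem_erase hl).symm]
    simp only [htdef]
    ring_nf
  rw [Finset.sum_congr rfl hsplit, Finset.sum_add_distrib]
  -- diagonal bound
  have hdiag : ∑ k ∈ Finset.range N, (a k * b k) ^ ((9:ℝ)/10) ≤ M ^ ((4:ℝ)/5) := by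
    have hterm : ∀ k ∈ Finset.range N, (a k * b k) ^ ((9:ℝ)/10) ≤ M ^ ((4:ℝ)/5) * x k := by
      intro k hk
      have hab : 0 ≤ a k * b k := mul_nonneg (ha0 k) (hb0 k)
      have h9 : (a k * b k) ^ ((9:ℝ)/10) = (x k) ^ ((9:ℝ)/5) := by
        rw [hxdef]
        simp only []
        rw [Real.sqrt_eq_rpow, ← Real.rpow_mul hab]
        norm_num
      rw [h9]
      rcases eq_or_lt_of_le (hx0 k) with h0 | h0
      · rw [← h0, Real.zero_rpow (by norm_num)]
        simp
      · rw [show (9:ℝ)/5 = 4/5 + 1 by norm_num, Real.rpow_add h0, Real.rpow_one]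
        exact mul_le_mul_of_nonneg_right
          (Real.rpow_le_rpow (hx0 k) (hxM k hk) (by norm_num)) (hx0 k)
    calc ∑ k ∈ Finset.range N, (a k * b k) ^ ((9:ℝ)/10)
        ≤ ∑ k ∈ Finset.range N, M ^ ((4:ℝ)/5) * x k := Finset.sum_le_sum hterm
      _ = M ^ ((4:ℝ)/5) * ∑ k ∈ Finset.range N, x k := by rw [Finset.mul_sum]
      _ ≤ M ^ ((4:ℝ)/5) * 1 :=
          mul_le_mul_of_nonneg_left hxsum (Real.rpow_nonneg hM0 _)
      _ = M ^ ((4:ℝ)/5) := mul_one _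
  -- off-diagonal bound
  have hoff : ∑ k ∈ Finset.range N,
      ∑ l ∈ (Finset.range N).erase k, (t k + t l) / (40 * ((k:ℝ) - (l:ℝ)) ^ 2)
      ≤ (2/5) * (1 - S) := by
    have heq : ∀ k ∈ Finset.range N,
        ∑ l ∈ (Finset.range N).erase k, (t k + t l) / (40 * ((k:ℝ) - (l:ℝ)) ^ 2)
        = (∑ l ∈ (Finset.range N).erase k, t k / (40 * ((k:ℝ) - (l:ℝ)) ^ 2))
          + ∑ l ∈ (Finset.range N).erase k, t l / (40 * ((k:ℝ) - (l:ℝ)) ^ 2) := by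
      intro k _
      rw [← Finset.sum_add_distrib]
      exact Finset.sum_congr rfl fun l _ => add_div _ _ _
    rw [Finset.sum_congr rfl heq, Finset.sum_add_distrib]
    have hB : ∑ k ∈ Finset.range N, ∑ l ∈ (Finset.range N).erase k,
          t l / (40 * ((k:ℝ) - (l:ℝ)) ^ 2)
        = ∑ k ∈ Finset.range N, ∑ l ∈ (Finset.range N).erase k,
          t k / (40 * ((k:ℝ) - (l:ℝ)) ^ 2) := by
      rw [sum_erase_swap' N (fun k l => t l / (40 * ((k:ℝ) - (l:ℝ)) ^ 2))]
      refine Finset.sum_congr rfl fun k _ => Finset.sum_congr rfl fun l _ => ?_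
      have hsq : ((l:ℝ) - (k:ℝ))^2 = ((k:ℝ) - (l:ℝ))^2 := by ring
      rw [hsq]
    rw [hB]
    have hA : ∀ k ∈ Finset.range N,
        ∑ l ∈ (Finset.range N).erase k, t k / (40 * ((k:ℝ) - (l:ℝ)) ^ 2)
          ≤ t k * (1/10) := by
      intro k _
      have hc : ∀ l ∈ (Finset.range N).erase k,
          t k / (40 * ((k:ℝ) - (l:ℝ)) ^ 2) = (t k / 40) * (1/(((k:ℝ)) - (l:ℝ))^2) := by
        intro l _
        rw [div_mul_eq_div_div, div_eq_mul_one_div]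
      rw [Finset.sum_congr rfl hc, ← Finset.mul_sum]
      have h4 := sum_inv_dist_sq_le' k N
      have ht40 : 0 ≤ t k / 40 := div_nonneg (ht0 k) (by norm_num)
      nlinarith [mul_le_mul_of_nonneg_left h4 ht40]
    have : ∑ k ∈ Finset.range N, ∑ l ∈ (Finset.range N).erase k,
          t k / (40 * ((k:ℝ) - (l:ℝ)) ^ 2)
        ≤ ∑ k ∈ Finset.range N, t k * (1/10) := Finset.sum_le_sum hA
    have h10 : ∑ k ∈ Finset.range N, t k * (1/10) = (2 - 2*S) * (1/10) := by
      rw [← Finset.sum_mul, htsum]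
    linarith
  -- combine
  have hgm := Real.geom_mean_le_arith_mean2_weighted
    (by norm_num : (0:ℝ) ≤ 4/5) (by norm_num : (0:ℝ) ≤ 1/5) hM0 zero_le_one (by norm_num)
  rw [Real.one_rpow, mul_one] at hgm
  nlinarith [sq_nonneg (M - 1)]
theorem edge_distribution_lemma (G : GCDGraph) (h : 0 < G.density)
    (p : ℕ) (hp : p ∈ G.RSet) :
    ∃ k l : ℕ,
      0 < G.muVpk p k / G.muV ∧ 0 < G.muWpk p l / G.muW ∧
      (k = l →
        (G.muVpk p k / G.muV * (G.muWpk p k / G.muW)) ^ ((9 : ℝ) / 10) ≤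
          G.muEpkl p k l / G.muE) ∧
      (k ≠ l →
        (G.muVpk p k / G.muV * (1 - G.muWpk p k / G.muW) +
          G.muWpk p k / G.muW * (1 - G.muVpk p k / G.muV) +
          G.muVpk p l / G.muV * (1 - G.muWpk p l / G.muW) +
          G.muWpk p l / G.muW * (1 - G.muVpk p l / G.muV)) /
            (40 * ((k : ℝ) - (l : ℝ)) ^ 2) ≤
          G.muEpkl p k l / G.muE) := by

  have hpp : p.Prime := hp.1
  by_contra hcon
  push_neg at hcon
  have hmuE_nn : 0 ≤ G.muE :=
    Finset.sum_nonneg fun e _ => mul_nonneg (G.mu_nonneg _) (G.mu_nonneg _)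
  have hmuV_nn : 0 ≤ G.muV := Finset.sum_nonneg fun v _ => G.mu_nonneg v
  have hmuW_nn : 0 ≤ G.muW := Finset.sum_nonneg fun w _ => G.mu_nonneg w
  have hd : 0 < G.muE / (G.muV * G.muW) := h
  have hVW : 0 < G.muV * G.muW := by
    rcases div_pos_iff.mp hd with ⟨_, h2⟩ | ⟨h1, _⟩
    · exact h2
    · linarith
  have hmuE : 0 < G.muE := by
    rcases div_pos_iff.mp hd with ⟨h1, _⟩ | ⟨h1, _⟩ <;> linarith
  have hmuV : 0 < G.muV := by nlinarith
  have hmuW : 0 < G.muW := by nlinarith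
  set N := (G.V ∪ G.W).sup id + 1 with hNdef
  have hfac : ∀ (n k : ℕ), n ≠ 0 →
      ((p ^ k ∣ n ∧ ¬ p ^ (k+1) ∣ n) ↔ n.factorization p = k) := by
    intro n k hn
    rw [Nat.Prime.pow_dvd_iff_le_factorization hpp hn,
      Nat.Prime.pow_dvd_iff_le_factorization hpp hn]
    omega
  have hbound : ∀ v ∈ G.V ∪ G.W, v.factorization p < N := by
    intro v hv
    have hv0 : 0 < v := by
      rcases Finset.mem_union.mp hv with h' | h'
      · exact G.V_pos v h'
      · exact G.W_pos v h'
    have h1 : p ^ v.factorization p ∣ v := Nat.ordProj_dvd v p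
    have h2 : p ^ v.factorization p ≤ v := Nat.le_of_dvd hv0 h1
    have h3 : v.factorization p < p ^ v.factorization p := Nat.lt_pow_self hpp.one_lt
    have h4 : v ≤ (G.V ∪ G.W).sup id := Finset.le_sup (f := id) hv
    omega
  have hVsum : ∑ k ∈ Finset.range N, G.muVpk p k = G.muV := by
    rw [GCDGraph.muV, ← Finset.sum_fiberwise_of_maps_to (g := fun v => v.factorization p)
      (fun v hv => Finset.mem_range.mpr (hbound v (Finset.mem_union_left _ hv))) G.mu]
    refine Finset.sum_congr rfl fun k _ => ?_
    rw [GCDGraph.muVpk]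
    refine Finset.sum_congr (Finset.filter_congr fun v hv => ?_) fun _ _ => rfl
    exact (hfac v k (G.V_pos v hv).ne')
  have hWsum : ∑ k ∈ Finset.range N, G.muWpk p k = G.muW := by
    rw [GCDGraph.muW, ← Finset.sum_fiberwise_of_maps_to (g := fun w => w.factorization p)
      (fun w hw => Finset.mem_range.mpr (hbound w (Finset.mem_union_right _ hw))) G.mu]
    refine Finset.sum_congr rfl fun k _ => ?_
    rw [GCDGraph.muWpk]
    refine Finset.sum_congr (Finset.filter_congr fun w hw => ?_) fun _ _ => rfl
    exact (hfac w k (G.W_pos w hw).ne')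
  have hEsum : ∑ q ∈ Finset.range N ×ˢ Finset.range N, G.muEpkl p q.1 q.2 = G.muE := by
    rw [GCDGraph.muE, ← Finset.sum_fiberwise_of_maps_to
      (g := fun e : ℕ × ℕ => (e.1.factorization p, e.2.factorization p))
      (t := Finset.range N ×ˢ Finset.range N)
      (fun e he => by
        have h' := Finset.mem_product.mp (G.E_sub he)
        exact Finset.mem_product.mpr
          ⟨Finset.mem_range.mpr (hbound _ (Finset.mem_union_left _ h'.1)),
           Finset.mem_range.mpr (hbound _ (Finset.mem_union_right _ h'.2))⟩)
      (fun e => G.mu e.1 * G.mu e.2)]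
    refine Finset.sum_congr rfl fun q _ => ?_
    rw [GCDGraph.muEpkl]
    refine Finset.sum_congr (Finset.filter_congr fun e he => ?_) fun _ _ => rfl
    have h' := Finset.mem_product.mp (G.E_sub he)
    have h1 : e.1 ≠ 0 := (G.V_pos _ h'.1).ne'
    have h2 : e.2 ≠ 0 := (G.W_pos _ h'.2).ne'
    rw [hfac e.1 q.1 h1, hfac e.2 q.2 h2, Prod.ext_iff]
  have hVpk_nn : ∀ k, 0 ≤ G.muVpk p k :=
    fun k => Finset.sum_nonneg fun v _ => G.mu_nonneg v
  have hWpk_nn : ∀ k, 0 ≤ G.muWpk p k :=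
    fun k => Finset.sum_nonneg fun w _ => G.mu_nonneg w
  have hEpkl_nn : ∀ k l, 0 ≤ G.muEpkl p k l :=
    fun k l => Finset.sum_nonneg fun e _ => mul_nonneg (G.mu_nonneg _) (G.mu_nonneg _)
  have hVpk_le : ∀ k, G.muVpk p k ≤ G.muV := fun k =>
    Finset.sum_le_sum_of_subset_of_nonneg (Finset.filter_subset _ _)
      fun v _ _ => G.mu_nonneg v
  have hWpk_le : ∀ k, G.muWpk p k ≤ G.muW := fun k =>
    Finset.sum_le_sum_of_subset_of_nonneg (Finset.filter_subset _ _)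
      fun w _ _ => G.mu_nonneg w
  have hE_le : ∀ k l, G.muEpkl p k l ≤ G.muVpk p k * G.muWpk p l := by
    intro k l
    rw [GCDGraph.muEpkl, GCDGraph.muVpk, GCDGraph.muWpk, Finset.sum_mul_sum,
      ← Finset.sum_product']
    refine Finset.sum_le_sum_of_subset_of_nonneg ?_
      fun e _ _ => mul_nonneg (G.mu_nonneg _) (G.mu_nonneg _)
    intro e he
    rw [Finset.mem_filter] at he
    have h' := Finset.mem_product.mp (G.E_sub he.1)
    exact Finset.mem_product.mpr
      ⟨Finset.mem_filter.mpr ⟨h'.1, he.2.1⟩, Finset.mem_filter.mpr ⟨h'.2, he.2.2⟩⟩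
  -- abbreviations as plain functions
  set F : ℕ × ℕ → ℝ := fun q =>
    if q.1 = q.2 then
      (G.muVpk p q.1 / G.muV * (G.muWpk p q.1 / G.muW)) ^ ((9:ℝ)/10)
    else
      (G.muVpk p q.1 / G.muV * (1 - G.muWpk p q.1 / G.muW) +
        G.muWpk p q.1 / G.muW * (1 - G.muVpk p q.1 / G.muV) +
        G.muVpk p q.2 / G.muV * (1 - G.muWpk p q.2 / G.muW) +
        G.muWpk p q.2 / G.muW * (1 - G.muVpk p q.2 / G.muV)) /
        (40 * ((q.1:ℝ) - (q.2:ℝ)) ^ 2) with hFdef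
  have hF_nn : ∀ q : ℕ × ℕ, 0 ≤ F q := by
    intro q
    rw [hFdef]
    dsimp only
    split_ifs with hq
    · exact Real.rpow_nonneg
        (mul_nonneg (div_nonneg (hVpk_nn _) hmuV_nn) (div_nonneg (hWpk_nn _) hmuW_nn)) _
    · refine div_nonneg ?_ (by positivity)
      have c1 : G.muWpk p q.1 / G.muW ≤ 1 := (div_le_one hmuW).mpr (hWpk_le _)
      have c2 : G.muVpk p q.1 / G.muV ≤ 1 := (div_le_one hmuV).mpr (hVpk_le _)
      have c3 : G.muWpk p q.2 / G.muW ≤ 1 := (div_le_one hmuW).mpr (hWpk_le _)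
      have c4 : G.muVpk p q.2 / G.muV ≤ 1 := (div_le_one hmuV).mpr (hVpk_le _)
      have d1 := div_nonneg (hVpk_nn q.1) hmuV_nn
      have d2 := div_nonneg (hWpk_nn q.1) hmuW_nn
      have d3 := div_nonneg (hVpk_nn q.2) hmuV_nn
      have d4 := div_nonneg (hWpk_nn q.2) hmuW_nn
      nlinarith
  have hlt : ∀ q : ℕ × ℕ, 0 < G.muVpk p q.1 → 0 < G.muWpk p q.2 →
      G.muEpkl p q.1 q.2 / G.muE < F q := by
    intro q hV' hW'
    have ha : 0 < G.muVpk p q.1 / G.muV := div_pos hV' hmuV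
    have hb : 0 < G.muWpk p q.2 / G.muW := div_pos hW' hmuW
    rcases eq_or_ne q.1 q.2 with heq | hne
    · rw [hFdef]
      dsimp only
      rw [if_pos heq]
      by_contra hc
      push_neg at hc
      exact (hcon q.1 q.2 ha hb fun _ => hc).1 heq
    · rw [hFdef]
      dsimp only
      rw [if_neg hne]
      exact (hcon q.1 q.2 ha hb fun h' => absurd h' hne).2
  have hle : ∀ q ∈ Finset.range N ×ˢ Finset.range N,
      G.muEpkl p q.1 q.2 / G.muE ≤ F q := by
    intro q _
    rcases lt_or_ge 0 (G.muVpk p q.1) with hV' | hV'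
    · rcases lt_or_ge 0 (G.muWpk p q.2) with hW' | hW'
      · exact (hlt q hV' hW').le
      · have hW0 : G.muWpk p q.2 = 0 := le_antisymm hW' (hWpk_nn _)
        have hz : G.muEpkl p q.1 q.2 = 0 := by
          have := hE_le q.1 q.2
          rw [hW0, mul_zero] at this
          exact le_antisymm this (hEpkl_nn _ _)
        rw [hz, zero_div]
        exact hF_nn q
    · have hV0 : G.muVpk p q.1 = 0 := le_antisymm hV' (hVpk_nn _)
      have hz : G.muEpkl p q.1 q.2 = 0 := by
        have := hE_le q.1 q.2
        rw [hV0, zero_mul] at this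
        exact le_antisymm this (hEpkl_nn _ _)
      rw [hz, zero_div]
      exact hF_nn q
  have hq0 : ∃ q ∈ Finset.range N ×ˢ Finset.range N, 0 < G.muEpkl p q.1 q.2 := by
    by_contra hq
    push_neg at hq
    have := Finset.sum_nonpos hq
    rw [hEsum] at this
    linarith
  obtain ⟨q0, hq0s, hq0pos⟩ := hq0
  have hVq0 : 0 < G.muVpk p q0.1 := by
    nlinarith [hE_le q0.1 q0.2, hVpk_nn q0.1, hWpk_nn q0.2]
  have hWq0 : 0 < G.muWpk p q0.2 := by
    nlinarith [hE_le q0.1 q0.2, hVpk_nn q0.1, hWpk_nn q0.2]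
  have h1lt : (1:ℝ) < ∑ q ∈ Finset.range N ×ˢ Finset.range N, F q := by
    have hs := Finset.sum_lt_sum hle ⟨q0, hq0s, hlt q0 hVq0 hWq0⟩
    have he1 : ∑ q ∈ Finset.range N ×ˢ Finset.range N, G.muEpkl p q.1 q.2 / G.muE = 1 := by
      rw [← Finset.sum_div, hEsum, div_self hmuE.ne']
    linarith
  have hle1 : ∑ q ∈ Finset.range N ×ˢ Finset.range N, F q ≤ 1 := by
    rw [hFdef]
    exact analytic_core' N (fun k => G.muVpk p k / G.muV) (fun k => G.muWpk p k / G.muW)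
      (fun k => div_nonneg (hVpk_nn k) hmuV_nn)
      (fun k => (div_le_one hmuV).mpr (hVpk_le k))
      (fun k => div_nonneg (hWpk_nn k) hmuW_nn)
      (fun k => (div_le_one hmuW).mpr (hWpk_le k))
      (by rw [← Finset.sum_div, hVsum, div_self hmuV.ne'])
      (by rw [← Finset.sum_div, hWsum, div_self hmuW.ne'])
  linarith
end

section
/- Let α_k, β_k, α_l, β_l ∈ [0,1] with α_k > 0 and β_l > 0 be such that α_k + α_l ≤ 1 and β_k + β_l ≤ 1, and let S = α_k(1−β_k) + β_k(1−α_k) + α_l(1−β_l) + β_l(1−α_l). If min(α_k, β_k) ≤ 1−R and min(α_l, β_l) ≤ 1−R for some R ∈ [0, 1/√2], then S²/(α_k β_l) ≥ R/2. -/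
theorem optimization_lemma (αk βk αl βl R : ℝ)
    (hαk0 : 0 < αk) (hαk1 : αk ≤ 1)
    (hβk0 : 0 ≤ βk) (hβk1 : βk ≤ 1)
    (hαl0 : 0 ≤ αl) (hαl1 : αl ≤ 1)
    (hβl0 : 0 < βl) (hβl1 : βl ≤ 1)
    (hsum1 : αk + αl ≤ 1) (hsum2 : βk + βl ≤ 1)
    (hR0 : 0 ≤ R) (hR1 : R ≤ 1 / Real.sqrt 2)
    (hk : min αk βk ≤ 1 - R) (hl : min αl βl ≤ 1 - R) :
    R / 2 ≤
      (αk * (1 - βk) + βk * (1 - αk) + αl * (1 - βl) + βl * (1 - αl)) ^ 2 / (αk * βl) := by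
  have hP : 0 < αk * βl := mul_pos hαk0 hβl0
  rw [le_div_iff₀ hP]
  obtain ⟨S, hSdef⟩ : ∃ s : ℝ,
      s = αk * (1 - βk) + βk * (1 - αk) + αl * (1 - βl) + βl * (1 - αl) := ⟨_, rfl⟩
  rw [← hSdef]
  -- R ≤ 1
  have hs2 : (1:ℝ) ≤ Real.sqrt 2 := by
    rw [show (1:ℝ) = Real.sqrt 1 from (Real.sqrt_one).symm]
    exact Real.sqrt_le_sqrt (by norm_num)
  have hR1' : R ≤ 1 := by
    have h : 1 / Real.sqrt 2 ≤ 1 := by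
      rw [div_le_one (by linarith)]; linarith
    linarith
  -- basic nonnegativity facts
  have t1 : 0 ≤ αk * (1 - βk) := mul_nonneg hαk0.le (by linarith)
  have t2 : 0 ≤ βk * (1 - αk) := mul_nonneg hβk0 (by linarith)
  have t3 : 0 ≤ αl * (1 - βl) := mul_nonneg hαl0 (by linarith)
  have t4 : 0 ≤ βl * (1 - αl) := mul_nonneg hβl0.le (by linarith)
  have u1 : αk * βl ≤ αk * (1 - βk) :=
    mul_le_mul_of_nonneg_left (by linarith) hαk0.le
  have u2 : αk * βl ≤ βl * (1 - αl) := by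
    have h := mul_le_mul_of_nonneg_left (show αk ≤ 1 - αl by linarith) hβl0.le
    linarith [h]
  have hSnn : 0 ≤ S := by rw [hSdef]; linarith
  have hs_ab : αk * βl ≤ S := by rw [hSdef]; linarith
  have hs_2ab : 2 * (αk * βl) ≤ S := by rw [hSdef]; linarith
  obtain h1 | h1 := min_le_iff.mp hk <;> obtain h2 | h2 := min_le_iff.mp hl
  · -- Case (i): αk ≤ 1 - R, αl ≤ 1 - R
    rcases le_or_gt αk R with hc | hc
    · -- S ≥ αk and S ≥ R·βl
      have e1 : αk ≤ S := by
        have p1 : 0 ≤ βk * (R - αk) := mul_nonneg hβk0 (by linarith)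
        have p2 : 0 ≤ βk * (1 - αk - R) := mul_nonneg hβk0 (by linarith)
        rw [hSdef]; linarith
      have e2 : R * βl ≤ S := by
        have p : 0 ≤ βl * (1 - αl - R) := mul_nonneg hβl0.le (by linarith)
        rw [hSdef]; linarith
      have key : αk * (R * βl) ≤ S * S :=
        mul_le_mul e1 e2 (mul_nonneg hR0 hβl0.le) hSnn
      linarith [key, mul_nonneg hR0 hP.le]
    · -- S ≥ R and S ≥ αk·βl
      have e1 : R ≤ S := by
        have p1 : 0 ≤ (1 - βk) * (αk - R) := mul_nonneg (by linarith) (by linarith)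
        have p2 : 0 ≤ βk * (1 - αk - R) := mul_nonneg hβk0 (by linarith)
        rw [hSdef]; linarith
      have key : R * (αk * βl) ≤ S * S := mul_le_mul e1 hs_ab hP.le hSnn
      linarith [key, mul_nonneg hR0 hP.le]
  · -- Case (ii): αk ≤ 1 - R, βl ≤ 1 - R
    have eαk : αk ≤ R → αk ≤ S := by
      intro hc
      have p1 : 0 ≤ βk * (R - αk) := mul_nonneg hβk0 (by linarith)
      have p2 : 0 ≤ βk * (1 - αk - R) := mul_nonneg hβk0 (by linarith)
      rw [hSdef]; linarith
    have eRk : R ≤ αk → R ≤ S := by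
      intro hc
      have p1 : 0 ≤ (1 - βk) * (αk - R) := mul_nonneg (by linarith) (by linarith)
      have p2 : 0 ≤ βk * (1 - αk - R) := mul_nonneg hβk0 (by linarith)
      rw [hSdef]; linarith
    have eβl : βl ≤ R → βl ≤ S := by
      intro hc
      have q1 : 0 ≤ αl * (R - βl) := mul_nonneg hαl0 (by linarith)
      have q2 : 0 ≤ αl * (1 - βl - R) := mul_nonneg hαl0 (by linarith)
      rw [hSdef]; linarith
    have eRl : R ≤ βl → R ≤ S := by
      intro hc
      have q1 : 0 ≤ (1 - αl) * (βl - R) := mul_nonneg (by linarith) (by linarith)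
      have q2 : 0 ≤ αl * (1 - βl - R) := mul_nonneg hαl0 (by linarith)
      rw [hSdef]; linarith
    rcases le_or_gt αk R with hc1 | hc1 <;> rcases le_or_gt βl R with hc2 | hc2
    · have key : αk * βl ≤ S * S :=
        mul_le_mul (eαk hc1) (eβl hc2) hβl0.le hSnn
      linarith [key, mul_nonneg (show (0:ℝ) ≤ 2 - R by linarith) hP.le]
    · have key : αk * R ≤ S * S := mul_le_mul (eαk hc1) (eRl hc2.le) hR0 hSnn
      linarith [key, mul_nonneg (mul_nonneg hR0 hαk0.le) (show (0:ℝ) ≤ 2 - βl by linarith)]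
    · have key : R * βl ≤ S * S := mul_le_mul (eRk hc1.le) (eβl hc2) hβl0.le hSnn
      linarith [key, mul_nonneg (mul_nonneg hR0 hβl0.le) (show (0:ℝ) ≤ 2 - αk by linarith)]
    · have key : R * (2 * (αk * βl)) ≤ S * S :=
        mul_le_mul (eRk hc1.le) hs_2ab (by positivity) hSnn
      linarith [key, mul_nonneg hR0 hP.le]
  · -- Case (iii): βk ≤ 1 - R, αl ≤ 1 - R
    rcases le_or_gt (1/2 : ℝ) αk with hc1 | hc1
    · have e1 : R * αk ≤ S := by
        have p : 0 ≤ αk * (1 - βk - R) := mul_nonneg hαk0.le (by linarith)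
        rw [hSdef]; linarith
      have key : (R * αk) * (αk * βl) ≤ S * S :=
        mul_le_mul e1 hs_ab hP.le hSnn
      linarith [key, mul_nonneg (mul_nonneg (mul_nonneg hR0 hαk0.le) hβl0.le)
        (show (0:ℝ) ≤ αk - 1/2 by linarith)]
    · rcases le_or_gt (1/2 : ℝ) βl with hc2 | hc2
      · have e1 : R * βl ≤ S := by
          have p : 0 ≤ βl * (1 - αl - R) := mul_nonneg hβl0.le (by linarith)
          rw [hSdef]; linarith
        have key : (R * βl) * (αk * βl) ≤ S * S :=
          mul_le_mul e1 hs_ab hP.le hSnn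
        linarith [key, mul_nonneg (mul_nonneg (mul_nonneg hR0 hαk0.le) hβl0.le)
          (show (0:ℝ) ≤ βl - 1/2 by linarith)]
      · have e1 : αk + βl ≤ S := by
          have p1 : 0 ≤ βk * (1 - 2*αk) := mul_nonneg hβk0 (by linarith)
          have p2 : 0 ≤ αl * (1 - 2*βl) := mul_nonneg hαl0 (by linarith)
          rw [hSdef]; linarith
        have key : (αk + βl) * (αk + βl) ≤ S * S :=
          mul_le_mul e1 e1 (by positivity) hSnn
        linarith [key, sq_nonneg (αk - βl),
          mul_nonneg (show (0:ℝ) ≤ 8 - R by linarith) hP.le]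
  · -- Case (iv): βk ≤ 1 - R, βl ≤ 1 - R
    rcases le_or_gt βl R with hc | hc
    · have e1 : βl ≤ S := by
        have q1 : 0 ≤ αl * (R - βl) := mul_nonneg hαl0 (by linarith)
        have q2 : 0 ≤ αl * (1 - βl - R) := mul_nonneg hαl0 (by linarith)
        rw [hSdef]; linarith
      have e2 : R * αk ≤ S := by
        have p : 0 ≤ αk * (1 - βk - R) := mul_nonneg hαk0.le (by linarith)
        rw [hSdef]; linarith
      have key : βl * (R * αk) ≤ S * S :=
        mul_le_mul e1 e2 (mul_nonneg hR0 hαk0.le) hSnn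
      linarith [key, mul_nonneg hR0 hP.le]
    · have e1 : R ≤ S := by
        have q1 : 0 ≤ (1 - αl) * (βl - R) := mul_nonneg (by linarith) (by linarith)
        have q2 : 0 ≤ αl * (1 - βl - R) := mul_nonneg hαl0 (by linarith)
        rw [hSdef]; linarith
      have key : R * (αk * βl) ≤ S * S := mul_le_mul e1 hs_ab hP.le hSnn
      linarith [key, mul_nonneg hR0 hP.le]
end

section
/- Let G = (μ,𝒱,𝒲,ℰ,𝒫,f,g) be a GCD graph with δ(G) > 0 and let p ∈ ℛ^♮(G). Let (k,l) be a pair of non-negative integers satisfying the conclusion of the edge-distribution lemma for p (i.e., α_k, β_l > 0 and μ(ℰ_{p^k,p^l})/μ(ℰ) ≥ (α_kβ_k)^{9/10} if k=l, and ≥ (α_k(1−β_k)+β_k(1−α_k)+α_l(1−β_l)+β_l(1−α_l))/(40(k−l)²) if k≠l, where α_j = μ(𝒱_{p^j})/μ(𝒱), β_j = μ(𝒲_{p^j})/μ(𝒲)). Then there is a GCD subgraph G' = (μ,𝒱',𝒲',ℰ',𝒫',f',g') of G with 𝒫' = 𝒫 ∪ {p} and ℛ(G') ⊆ ℛ(G)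 \ {p} such that: δ(G')/δ(G) ≥ 1 if k = l, and δ(G')/δ(G) ≥ 1/(20(k−l)²) if k ≠ l; and q(G')/q(G) ≥ 1 if k = l, and q(G')/q(G) ≥ p^{|k−l|−1/2}/(10^{15}|k−l|^{20}) if k ≠ l. -/
open Finset

open GCDGraph


section Aux

/-- The subgraph obtained by restricting to `𝒱_{p^k}`, `𝒲_{p^l}`, `ℰ_{p^k,p^l}`. -/
def stepGraph (G : GCDGraph) (p k l : ℕ) (hp : p.Prime) (hpP : p ∉ G.P) : GCDGraph where
  mu := G.mu
  mu_nonneg := G.mu_nonneg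
  V := G.V.filter (fun v => p ^ k ∣ v ∧ ¬ p ^ (k + 1) ∣ v)
  W := G.W.filter (fun w => p ^ l ∣ w ∧ ¬ p ^ (l + 1) ∣ w)
  E := G.E.filter (fun e => (p ^ k ∣ e.1 ∧ ¬ p ^ (k + 1) ∣ e.1) ∧
      (p ^ l ∣ e.2 ∧ ¬ p ^ (l + 1) ∣ e.2))
  P := insert p G.P
  f := fun q => if q = p then k else G.f q
  g := fun q => if q = p then l else G.g q
  V_pos := fun v hv => G.V_pos v (Finset.mem_filter.mp hv).1
  W_pos := fun w hw => G.W_pos w (Finset.mem_filter.mp hw).1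
  E_sub := by
    intro e he
    rw [Finset.mem_filter] at he
    obtain ⟨he, ⟨h1, h1'⟩, h2, h2'⟩ := he
    have := G.E_sub he
    rw [Finset.mem_product] at this ⊢
    exact ⟨Finset.mem_filter.mpr ⟨this.1, h1, h1'⟩, Finset.mem_filter.mpr ⟨this.2, h2, h2'⟩⟩
  P_prime := by
    intro q hq
    rcases Finset.mem_insert.mp hq with rfl | hq
    · exact hp
    · exact G.P_prime q hq
  div_V := by
    intro q hq v hv
    rw [Finset.mem_filter] at hv
    rcases Finset.mem_insert.mp hq with rfl | hq
    · simpa using hv.2.1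
    · have hqp : q ≠ p := fun h => hpP (h ▸ hq)
      simp only [if_neg hqp]
      exact G.div_V q hq v hv.1
  div_W := by
    intro q hq w hw
    rw [Finset.mem_filter] at hw
    rcases Finset.mem_insert.mp hq with rfl | hq
    · simpa using hw.2.1
    · have hqp : q ≠ p := fun h => hpP (h ▸ hq)
      simp only [if_neg hqp]
      exact G.div_W q hq w hw.1
  exact_gcd := by
    intro q hq e he
    rw [Finset.mem_filter] at he
    obtain ⟨he, ⟨h1, h1'⟩, h2, h2'⟩ := he
    rcases Finset.mem_insert.mp hq with rfl | hq
    · simp only [if_pos rfl]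
      constructor
      · exact Nat.dvd_gcd (dvd_trans (pow_dvd_pow q (min_le_left k l)) h1)
          (dvd_trans (pow_dvd_pow q (min_le_right k l)) h2)
      · intro hdvd
        rcases le_total k l with hkl | hkl
        · exact h1' ((pow_dvd_pow q (Nat.succ_le_succ (Nat.le_min.mpr ⟨le_rfl, hkl⟩))).trans
            (hdvd.trans (Nat.gcd_dvd_left _ _)))
        · exact h2' ((pow_dvd_pow q (Nat.succ_le_succ (Nat.le_min.mpr ⟨hkl, le_rfl⟩))).trans
            (hdvd.trans (Nat.gcd_dvd_right _ _)))
    · have hqp : q ≠ p := fun h => hpP (h ▸ hq)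
      simp only [if_neg hqp]
      exact G.exact_gcd q hq e he
  diff_exact_V := by
    intro q hq hfg v hv
    rw [Finset.mem_filter] at hv
    rcases Finset.mem_insert.mp hq with rfl | hq
    · simpa using hv.2
    · have hqp : q ≠ p := fun h => hpP (h ▸ hq)
      simp only [if_neg hqp] at hfg ⊢
      exact G.diff_exact_V q hq hfg v hv.1
  diff_exact_W := by
    intro q hq hfg w hw
    rw [Finset.mem_filter] at hw
    rcases Finset.mem_insert.mp hq with rfl | hq
    · simpa using hw.2
    · have hqp : q ≠ p := fun h => hpP (h ▸ hq)
      simp only [if_neg hqp] at hfg ⊢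
      exact G.diff_exact_W q hq hfg w hw.1

end Aux


section Aux2

/-- The local factor of the quality at a prime `q`. -/
noncomputable def Fq (G : GCDGraph) (q : ℕ) : ℝ :=
  (q : ℝ) ^ (max (G.f q) (G.g q) - min (G.f q) (G.g q)) /
    ((1 - (if G.f q = G.g q ∧ 1 ≤ G.f q then 1 / (q : ℝ) else 0)) ^ 2 *
      (1 - (q : ℝ) ^ (-(31 : ℝ) / 30)) ^ 10)

lemma quality_eq (G : GCDGraph) :
    G.quality = G.muE ^ 10 / (G.muV * G.muW) ^ 9 * ∏ q ∈ G.P, Fq G q := by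
  have hq : G.quality = G.density ^ 10 * G.muV * G.muW * ∏ q ∈ G.P, Fq G q := rfl
  rw [hq, GCDGraph.density]
  generalize (∏ q ∈ G.P, Fq G q) = Pi
  by_cases hAB : G.muV * G.muW = 0
  · rcases mul_eq_zero.mp hAB with h | h <;>
      simp [h, zero_pow, mul_assoc, mul_comm, hAB]
  · field_simp

lemma den_pos (q : ℕ) (h2 : (2 : ℝ) ≤ (q : ℝ)) (c : Prop) [Decidable c] :
    0 < (1 - (if c then 1 / (q : ℝ) else 0)) ^ 2 *
      (1 - (q : ℝ) ^ (-(31 : ℝ) / 30)) ^ 10 := by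
  have hrp : (q : ℝ) ^ (-(31 : ℝ) / 30) < 1 :=
    Real.rpow_lt_one_of_one_lt_of_neg (by linarith) (by norm_num)
  apply mul_pos
  · apply pow_pos
    split_ifs
    · have : 1 / (q : ℝ) ≤ 1 / 2 := by
        apply one_div_le_one_div_of_le <;> linarith
      linarith
    · norm_num
  · apply pow_pos; linarith

lemma den_le_one (q : ℕ) (h2 : (2 : ℝ) ≤ (q : ℝ)) (c : Prop) [Decidable c] :
    (1 - (if c then 1 / (q : ℝ) else 0)) ^ 2 *
      (1 - (q : ℝ) ^ (-(31 : ℝ) / 30)) ^ 10 ≤ 1 := by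
  have hrp : 0 < (q : ℝ) ^ (-(31 : ℝ) / 30) := Real.rpow_pos_of_pos (by linarith) _
  have hrp1 : (q : ℝ) ^ (-(31 : ℝ) / 30) < 1 :=
    Real.rpow_lt_one_of_one_lt_of_neg (by linarith) (by norm_num)
  have hind : 0 ≤ (if c then 1 / (q : ℝ) else 0) := by
    split_ifs
    · positivity
    · exact le_refl 0
  calc (1 - (if c then 1 / (q : ℝ) else 0)) ^ 2 *
      (1 - (q : ℝ) ^ (-(31 : ℝ) / 30)) ^ 10
      ≤ 1 ^ 2 * 1 ^ 10 := by
        apply mul_le_mul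
        · apply pow_le_pow_left₀ _ (by linarith)
          split_ifs with hcond
          · have : 1 / (q : ℝ) ≤ 1 / 2 := by
              apply one_div_le_one_div_of_le <;> linarith
            linarith
          · norm_num
        · apply pow_le_pow_left₀ (by linarith) (by linarith)
        · positivity
        · norm_num
    _ = 1 := by norm_num

lemma Fq_pos (G : GCDGraph) (q : ℕ) (hq : q.Prime) : 0 < Fq G q := by
  have h2 : (2 : ℝ) ≤ (q : ℝ) := by exact_mod_cast hq.two_le
  exact div_pos (pow_pos (by linarith) _) (den_pos q h2 _)

lemma prodFq_pos (G : GCDGraph) : 0 < ∏ q ∈ G.P, Fq G q :=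
  Finset.prod_pos fun q hq => Fq_pos G q (G.P_prime q hq)

lemma stepGraph_quality (G : GCDGraph) (p k l : ℕ) (hp : p.Prime) (hpP : p ∉ G.P) :
    (stepGraph G p k l hp hpP).quality =
      G.muEpkl p k l ^ 10 / (G.muVpk p k * G.muWpk p l) ^ 9 *
        (Fq (stepGraph G p k l hp hpP) p * ∏ q ∈ G.P, Fq G q) := by
  rw [quality_eq]
  have h1 : (stepGraph G p k l hp hpP).muE = G.muEpkl p k l := rfl
  have h2 : (stepGraph G p k l hp hpP).muV = G.muVpk p k := rfl
  have h3 : (stepGraph G p k l hp hpP).muW = G.muWpk p l := rfl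
  have h4 : (stepGraph G p k l hp hpP).P = insert p G.P := rfl
  rw [h1, h2, h3, h4, Finset.prod_insert hpP]
  congr 1
  congr 1
  apply Finset.prod_congr rfl
  intro q hq
  have hqp : q ≠ p := fun h => hpP (h ▸ hq)
  simp only [Fq, stepGraph, if_neg hqp]

lemma Fq_stepGraph_self (G : GCDGraph) (p k l : ℕ) (hp : p.Prime) (hpP : p ∉ G.P) :
    Fq (stepGraph G p k l hp hpP) p =
      (p : ℝ) ^ (max k l - min k l) /
        ((1 - (if k = l ∧ 1 ≤ k then 1 / (p : ℝ) else 0)) ^ 2 *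
          (1 - (p : ℝ) ^ (-(31 : ℝ) / 30)) ^ 10) := by
  simp [Fq, stepGraph]

end Aux2


section Aux3

private lemma c_le' (t z : ℝ) (ht : 0 ≤ t) (hz : (10.48576:ℝ) ≤ 512 * z) :
    (40:ℝ) ^ 10 / 10 ^ 15 * t ^ 9 ≤ (2*t) ^ 9 * z := by
  calc (40:ℝ)^10/10^15 * t^9 = 10.48576 * t^9 := by norm_num
    _ ≤ (512*z) * t^9 := mul_le_mul_of_nonneg_right hz (pow_nonneg ht 9)
    _ = (2*t)^9 * z := by ring

lemma key_ineq (s x y N : ℝ) (hs : Real.sqrt 2 ≤ s)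
    (hx : 0 < x) (hx1 : x ≤ 1) (hy : 0 < y) (hy1 : y ≤ 1)
    (h1 : x / s ≤ N) (h2 : y / s ≤ N) (h3 : 2 * (x * y) ≤ N)
    (h4 : Real.sqrt (x * y) ≤ N ∨ (1 - x) / 2 ≤ N ∨ (1 - y) / 2 ≤ N) :
    40 ^ 10 / 10 ^ 15 * (x * y) ^ 9 ≤ N ^ 10 * s := by
  have hs2 : (1.414 : ℝ) ≤ Real.sqrt 2 := by
    rw [show (1.414:ℝ) = Real.sqrt (1.414^2) by rw [Real.sqrt_sq]; norm_num]
    exact Real.sqrt_le_sqrt (by norm_num)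
  have hs1 : (1.414 : ℝ) ≤ s := le_trans hs2 hs
  have hspos : (0:ℝ) < s := by linarith
  have ht : (0:ℝ) < x * y := mul_pos hx hy
  have ht1 : x * y ≤ 1 := by nlinarith
  have hN : (0:ℝ) < N := lt_of_lt_of_le (by nlinarith) h3
  have h9 : (2 * (x*y)) ^ 9 ≤ N ^ 9 := pow_le_pow_left₀ (by positivity) h3 9
  have hxN : x ≤ N * s := (div_le_iff₀ hspos).mp h1
  have hyN : y ≤ N * s := (div_le_iff₀ hspos).mp h2
  rcases h4 with h4 | h4 | h4
  · rcases le_or_gt (x*y) 0.55 with hc | hc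
    · have h5 : (x*y) ^ 5 ≤ N ^ 10 := by
        calc (x*y)^5 = (Real.sqrt (x*y))^10 := by
              rw [show (10:ℕ) = 2*5 by norm_num, pow_mul, Real.sq_sqrt ht.le]
          _ ≤ N ^ 10 := pow_le_pow_left₀ (Real.sqrt_nonneg _) h4 10
      have key : 40 ^ 10 / 10 ^ 15 * (x*y)^9 ≤ (x*y)^5 := by
        have h4le : (x*y)^4 ≤ 0.55^4 := pow_le_pow_left₀ ht.le hc 4
        calc (40:ℝ)^10/10^15 * (x*y)^9 = ((40:ℝ)^10/10^15 * (x*y)^4) * (x*y)^5 := by ring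
          _ ≤ 1 * (x*y)^5 := by
              apply mul_le_mul_of_nonneg_right _ (pow_nonneg ht.le 5)
              calc (40:ℝ)^10/10^15 * (x*y)^4 ≤ (40:ℝ)^10/10^15 * 0.55^4 :=
                    mul_le_mul_of_nonneg_left h4le (by norm_num)
                _ ≤ 1 := by norm_num
          _ = (x*y)^5 := one_mul _
      calc (40:ℝ)^10/10^15 * (x*y)^9 ≤ (x*y)^5 := key
        _ ≤ N^10 := h5
        _ = N^10 * 1 := (mul_one _).symm
        _ ≤ N^10 * s := by
            apply mul_le_mul_of_nonneg_left (by linarith) (pow_nonneg hN.le 10)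
    · calc (40:ℝ)^10/10^15 * (x*y)^9 ≤ (2*(x*y))^9 * (2*(x*y)) :=
            c_le' _ _ ht.le (by linarith)
        _ ≤ N^9 * N := mul_le_mul h9 h3 (by positivity) (by positivity)
        _ = N^10 * 1 := by ring
        _ ≤ N^10 * s := by
            apply mul_le_mul_of_nonneg_left (by linarith) (pow_nonneg hN.le 10)
  · rcases le_or_gt x 0.96 with hc | hc
    · have hN02 : (0.02:ℝ) ≤ N := by linarith
      calc (40:ℝ)^10/10^15 * (x*y)^9 ≤ (2*(x*y))^9 * (0.02 * 1.414) :=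
            c_le' _ _ ht.le (by norm_num)
        _ = ((2*(x*y))^9 * 0.02) * 1.414 := by ring
        _ ≤ (N^9 * N) * s :=
            mul_le_mul (mul_le_mul h9 hN02 (by norm_num) (by positivity)) hs1
              (by norm_num) (by positivity)
        _ = N^10 * s := by ring
    · calc (40:ℝ)^10/10^15 * (x*y)^9 ≤ (2*(x*y))^9 * x := c_le' _ _ ht.le (by linarith)
        _ ≤ N^9 * (N*s) := mul_le_mul h9 hxN (by positivity) (by positivity)
        _ = N^10 * s := by ring
  · rcases le_or_gt y 0.96 with hc | hc
    · have hN02 : (0.02:ℝ) ≤ N := by linarith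
      calc (40:ℝ)^10/10^15 * (x*y)^9 ≤ (2*(x*y))^9 * (0.02 * 1.414) :=
            c_le' _ _ ht.le (by norm_num)
        _ = ((2*(x*y))^9 * 0.02) * 1.414 := by ring
        _ ≤ (N^9 * N) * s :=
            mul_le_mul (mul_le_mul h9 hN02 (by norm_num) (by positivity)) hs1
              (by norm_num) (by positivity)
        _ = N^10 * s := by ring
    · calc (40:ℝ)^10/10^15 * (x*y)^9 ≤ (2*(x*y))^9 * y := c_le' _ _ ht.le (by linarith)
        _ ≤ N^9 * (N*s) := mul_le_mul h9 hyN (by positivity) (by positivity)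
        _ = N^10 * s := by ring

/-- The master inequality combining the edge-distribution facts and `ℛ^♮`. -/
lemma master (s x b1 a2 y : ℝ) (hs : Real.sqrt 2 ≤ s)
    (hx : 0 < x) (hy : 0 < y) (hb1 : 0 ≤ b1) (ha2 : 0 ≤ a2)
    (hsum1 : x + a2 ≤ 1) (hsum2 : b1 + y ≤ 1)
    (hm1 : min x b1 ≤ 1 - 1/s) (hm2 : min a2 y ≤ 1 - 1/s) :
    2*(x*y) ≤ x*(1-b1) + b1*(1-x) + a2*(1-y) + y*(1-a2) ∧
    40^10/10^15 * (x*y)^9 ≤ (x*(1-b1) + b1*(1-x) + a2*(1-y) + y*(1-a2))^10 * s := by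
  have hs0 : 0 < s := lt_of_lt_of_le (Real.sqrt_pos.mpr two_pos) hs
  have hs0' : 1/s ≤ 1 := by
    rw [div_le_one hs0]
    have h1 : (1:ℝ) ≤ Real.sqrt 2 := by
      rw [show (1:ℝ) = Real.sqrt 1 by rw [Real.sqrt_one]]
      exact Real.sqrt_le_sqrt (by norm_num)
    linarith
  have hx1 : x ≤ 1 := by linarith
  have hy1 : y ≤ 1 := by linarith
  have hb11 : b1 ≤ 1 := by linarith
  have ha21 : a2 ≤ 1 := by linarith
  have t2 : 0 ≤ b1*(1-x) := mul_nonneg hb1 (by linarith)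
  have t3 : 0 ≤ a2*(1-y) := mul_nonneg ha2 (by linarith)
  have t1 : 0 ≤ x*(1-b1) := mul_nonneg hx.le (by linarith)
  have t4 : 0 ≤ y*(1-a2) := mul_nonneg hy.le (by linarith)
  have h3 : 2*(x*y) ≤ x*(1-b1) + b1*(1-x) + a2*(1-y) + y*(1-a2) := by
    nlinarith [mul_nonneg hx.le (by linarith : (0:ℝ) ≤ 1 - b1 - y),
      mul_nonneg hy.le (by linarith : (0:ℝ) ≤ 1 - a2 - x)]
  have h1 : x/s ≤ x*(1-b1) + b1*(1-x) + a2*(1-y) + y*(1-a2) := by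
    rcases le_total x b1 with hc | hc
    · rw [min_eq_left hc] at hm1
      have hxx : x * (1/s) ≤ b1 * (1-x) := by
        apply mul_le_mul hc (by linarith) (by positivity) hb1
      calc x/s = x * (1/s) := by ring
        _ ≤ b1*(1-x) := hxx
        _ ≤ _ := by linarith
    · rw [min_eq_right hc] at hm1
      have hxx : x * (1/s) ≤ x * (1-b1) := mul_le_mul_of_nonneg_left (by linarith) hx.le
      calc x/s = x*(1/s) := by ring
        _ ≤ x*(1-b1) := hxx
        _ ≤ _ := by linarith
  have h2 : y/s ≤ x*(1-b1) + b1*(1-x) + a2*(1-y) + y*(1-a2) := by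
    rcases le_total a2 y with hc | hc
    · rw [min_eq_left hc] at hm2
      have hyy : y*(1/s) ≤ y*(1-a2) := mul_le_mul_of_nonneg_left (by linarith) hy.le
      calc y/s = y*(1/s) := by ring
        _ ≤ y*(1-a2) := hyy
        _ ≤ _ := by linarith
    · rw [min_eq_right hc] at hm2
      have hyy : y * (1/s) ≤ a2 * (1-y) := by
        apply mul_le_mul hc (by linarith) (by positivity) ha2
      calc y/s = y*(1/s) := by ring
        _ ≤ a2*(1-y) := hyy
        _ ≤ _ := by linarith
  have h4 : Real.sqrt (x*y) ≤ x*(1-b1) + b1*(1-x) + a2*(1-y) + y*(1-a2) ∨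
      (1-x)/2 ≤ x*(1-b1) + b1*(1-x) + a2*(1-y) + y*(1-a2) ∨
      (1-y)/2 ≤ x*(1-b1) + b1*(1-x) + a2*(1-y) + y*(1-a2) := by
    by_cases hc1 : b1 ≤ 1/2
    · by_cases hc2 : a2 ≤ 1/2
      · left
        have hsq : Real.sqrt (x*y) ≤ (x+y)/2 := by
          rw [show (x+y)/2 = Real.sqrt (((x+y)/2)^2) by rw [Real.sqrt_sq (by positivity)]]
          exact Real.sqrt_le_sqrt (by nlinarith [sq_nonneg (x-y)])
        have e1 : x*(1/2) ≤ x*(1-b1) := mul_le_mul_of_nonneg_left (by linarith) hx.le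
        have e2 : y*(1/2) ≤ y*(1-a2) := mul_le_mul_of_nonneg_left (by linarith) hy.le
        have : (x+y)/2 ≤ x*(1-b1) + b1*(1-x) + a2*(1-y) + y*(1-a2) := by linarith
        linarith
      · right; right
        push_neg at hc2
        have : (1-y)*(1/2) ≤ (1-y)*a2 :=
          mul_le_mul_of_nonneg_left (by linarith) (by linarith)
        calc (1-y)/2 = (1-y)*(1/2) := by ring
          _ ≤ (1-y)*a2 := this
          _ = a2*(1-y) := by ring
          _ ≤ _ := by linarith
    · right; left
      push_neg at hc1
      have : (1-x)*(1/2) ≤ (1-x)*b1 :=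
        mul_le_mul_of_nonneg_left (by linarith) (by linarith)
      calc (1-x)/2 = (1-x)*(1/2) := by ring
        _ ≤ (1-x)*b1 := this
        _ = b1*(1-x) := by ring
        _ ≤ _ := by linarith
  exact ⟨h3, key_ineq s x y _ hs hx hx1 hy hy1 h1 h2 h3 h4⟩

lemma muVpk_add_le (G : GCDGraph) (p k l : ℕ) (hkl : k ≠ l) :
    G.muVpk p k + G.muVpk p l ≤ G.muV := by
  rw [GCDGraph.muVpk, GCDGraph.muVpk, ← Finset.sum_union]
  · apply Finset.sum_le_sum_of_subset_of_nonneg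
    · exact Finset.union_subset (Finset.filter_subset _ _) (Finset.filter_subset _ _)
    · exact fun i _ _ => G.mu_nonneg i
  · rw [Finset.disjoint_left]
    intro v h1 h2
    rw [Finset.mem_filter] at h1 h2
    rcases lt_or_gt_of_ne hkl with hlt | hlt
    · exact h1.2.2 (dvd_trans (pow_dvd_pow p hlt) h2.2.1)
    · exact h2.2.2 (dvd_trans (pow_dvd_pow p hlt) h1.2.1)

lemma muWpk_add_le (G : GCDGraph) (p k l : ℕ) (hkl : k ≠ l) :
    G.muWpk p k + G.muWpk p l ≤ G.muW := by
  rw [GCDGraph.muWpk, GCDGraph.muWpk, ← Finset.sum_union]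
  · apply Finset.sum_le_sum_of_subset_of_nonneg
    · exact Finset.union_subset (Finset.filter_subset _ _) (Finset.filter_subset _ _)
    · exact fun i _ _ => G.mu_nonneg i
  · rw [Finset.disjoint_left]
    intro v h1 h2
    rw [Finset.mem_filter] at h1 h2
    rcases lt_or_gt_of_ne hkl with hlt | hlt
    · exact h1.2.2 (dvd_trans (pow_dvd_pow p hlt) h2.2.1)
    · exact h2.2.2 (dvd_trans (pow_dvd_pow p hlt) h1.2.1)

end Aux3


section Aux4

lemma density_final_eq (E A B a1 b2 E1 : ℝ) (hE : 0 < E) (hA : 0 < A) (hB : 0 < B)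
    (ha1 : 0 < a1) (hb2 : 0 < b2) (hle : a1/A*(b2/B) ≤ 1)
    (heq' : (a1/A*(b2/B))^((9:ℝ)/10) ≤ E1/E) : E/(A*B) ≤ E1/(a1*b2) := by
  have ht : 0 < a1/A*(b2/B) := mul_pos (div_pos ha1 hA) (div_pos hb2 hB)
  have hE1' : (a1/A*(b2/B))^((9:ℝ)/10) * E ≤ E1 := (le_div_iff₀ hE).mp heq'
  have hrpow : a1/A*(b2/B) ≤ (a1/A*(b2/B))^((9:ℝ)/10) := by
    have h2 := Real.rpow_le_rpow_of_exponent_ge ht hle (by norm_num : (9:ℝ)/10 ≤ 1)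
    rwa [Real.rpow_one] at h2
  rw [div_le_div_iff₀ (mul_pos hA hB) (mul_pos ha1 hb2)]
  calc E * (a1*b2) = (a1/A*(b2/B)) * E * (A*B) := by field_simp; try ring
    _ ≤ (a1/A*(b2/B))^((9:ℝ)/10) * E * (A*B) :=
        mul_le_mul_of_nonneg_right (mul_le_mul_of_nonneg_right hrpow hE.le)
          (mul_pos hA hB).le
    _ ≤ E1 * (A*B) := mul_le_mul_of_nonneg_right hE1' (mul_pos hA hB).le

lemma quality_final_eq (E A B a1 b2 E1 Fp Pi : ℝ) (hE : 0 < E) (hA : 0 < A) (hB : 0 < B)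
    (ha1 : 0 < a1) (hb2 : 0 < b2) (hE1 : 0 ≤ E1) (hPi : 0 ≤ Pi) (hFp : 1 ≤ Fp)
    (hle : a1/A*(b2/B) ≤ 1)
    (heq' : (a1/A*(b2/B))^((9:ℝ)/10) ≤ E1/E) :
    E^10/(A*B)^9 * Pi ≤ E1^10/(a1*b2)^9 * (Fp * Pi) := by
  have ht : 0 < a1/A*(b2/B) := mul_pos (div_pos ha1 hA) (div_pos hb2 hB)
  have hE1' : (a1/A*(b2/B))^((9:ℝ)/10) * E ≤ E1 := (le_div_iff₀ hE).mp heq'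
  have h10 : ((a1/A*(b2/B))^((9:ℝ)/10) * E)^10 ≤ E1^10 :=
    pow_le_pow_left₀ (mul_nonneg (Real.rpow_nonneg ht.le _) hE.le) hE1' 10
  have hpow : ((a1/A*(b2/B)) ^ ((9:ℝ)/10))^(10:ℕ) = (a1/A*(b2/B))^(9:ℕ) := by
    rw [← Real.rpow_natCast ((a1/A*(b2/B)) ^ ((9:ℝ)/10)) 10, ← Real.rpow_mul ht.le,
      ← Real.rpow_natCast (a1/A*(b2/B)) 9]
    norm_num
  have main : E^10/(A*B)^9 ≤ E1^10/(a1*b2)^9 := by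
    rw [div_le_div_iff₀ (pow_pos (mul_pos hA hB) 9) (pow_pos (mul_pos ha1 hb2) 9)]
    calc E^10 * (a1*b2)^9 = ((a1/A*(b2/B))^(9:ℕ) * E^10) * (A*B)^9 := by
          field_simp; try ring
      _ = ((a1/A*(b2/B)) ^ ((9:ℝ)/10) * E)^10 * (A*B)^9 := by
          rw [mul_pow ((a1/A*(b2/B)) ^ ((9:ℝ)/10)) E 10, hpow]
      _ ≤ E1^10 * (A*B)^9 := mul_le_mul_of_nonneg_right h10 (pow_nonneg (mul_pos hA hB).le 9)
  calc E^10/(A*B)^9 * Pi ≤ E1^10/(a1*b2)^9 * Pi := mul_le_mul_of_nonneg_right main hPi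
    _ ≤ E1^10/(a1*b2)^9 * Pi * Fp := by
        apply le_mul_of_one_le_right _ hFp
        exact mul_nonneg (div_nonneg (pow_nonneg hE1 10)
          (pow_nonneg (mul_pos ha1 hb2).le 9)) hPi
    _ = E1^10/(a1*b2)^9 * (Fp * Pi) := by ring

lemma density_final (E A B a1 b2 E1 D2 Nv : ℝ) (hE : 0 < E) (hA : 0 < A) (hB : 0 < B)
    (ha1 : 0 < a1) (hb2 : 0 < b2) (hD2 : 0 < D2)
    (h3 : 2*(a1/A*(b2/B)) ≤ Nv) (hne' : Nv/(40*D2) ≤ E1/E) :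
    1/(20*D2) ≤ (E1/(a1*b2))/(E/(A*B)) := by
  have hX : (E1/(a1*b2))/(E/(A*B)) = (E1*(A*B))/(E*(a1*b2)) := by
    rw [div_div_div_comm, div_div_eq_mul_div, div_mul_eq_mul_div, div_div]
    try rw [mul_comm (a1*b2) E]
  have hne2 : Nv * E ≤ E1 * (40*D2) := by
    rw [div_le_div_iff₀ (by positivity) hE] at hne'
    exact hne'
  rw [hX, div_le_div_iff₀ (by positivity) (mul_pos hE (mul_pos ha1 hb2))]
  calc 1 * (E*(a1*b2)) = (a1/A*(b2/B)) * ((A*B)*E) := by field_simp; try ring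
    _ ≤ (Nv/2) * ((A*B)*E) := by
        apply mul_le_mul_of_nonneg_right (by linarith) (mul_nonneg (mul_pos hA hB).le hE.le)
    _ = (Nv*E) * ((A*B)/2) := by ring
    _ ≤ (E1*(40*D2)) * ((A*B)/2) :=
        mul_le_mul_of_nonneg_right hne2 (by linarith [(mul_pos hA hB).le])
    _ = E1*(A*B)*(20*D2) := by ring

lemma quality_final (E A B a1 b2 E1 Nv M sp pm Fp Pi : ℝ)
    (hE : 0 < E) (hA : 0 < A) (hB : 0 < B) (ha1 : 0 < a1) (hb2 : 0 < b2)
    (hE1 : 0 ≤ E1) (hM : 1 ≤ M) (hsp : 0 < sp) (hpm : 0 ≤ pm) (hPi : 0 ≤ Pi)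
    (hNv : 0 < Nv)
    (hne' : Nv/(40*M^2) ≤ E1/E)
    (hkey : 40^10/10^15 * (a1/A*(b2/B))^9 ≤ Nv^10 * sp)
    (hFp : pm ≤ Fp) :
    pm/sp/(10^15*M^20) * (E^10/(A*B)^9 * Pi) ≤ E1^10/(a1*b2)^9 * (Fp*Pi) := by
  have hM0 : (0:ℝ) < M := by linarith
  have hE' : Nv/(40*M^2) * E ≤ E1 := (le_div_iff₀ hE).mp hne'
  have hE10 : (Nv/(40*M^2))^10 * E^10 ≤ E1^10 := by
    rw [← mul_pow]
    apply pow_le_pow_left₀ _ hE' 10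
    exact mul_nonneg (div_nonneg hNv.le (by positivity)) hE.le
  have key' : (40:ℝ)^10 * (a1*b2)^9 ≤ (Nv^10 * sp * 10^15) * (A*B)^9 := by
    have h5 := mul_le_mul_of_nonneg_right hkey
      (le_of_lt (mul_pos (by norm_num : (0:ℝ) < 10^15) (pow_pos (mul_pos hA hB) 9)))
    calc (40:ℝ)^10*(a1*b2)^9 = (40^10/10^15 * (a1/A*(b2/B))^9) * (10^15*(A*B)^9) := by
          field_simp; try ring
      _ ≤ (Nv^10*sp) * (10^15*(A*B)^9) := h5
      _ = (Nv^10*sp*10^15)*(A*B)^9 := by ring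
  have hM2 : (0:ℝ) < 40*M^2 := by nlinarith
  have step2 : pm/sp/(10^15*M^20) * (E^10/(A*B)^9) ≤
      (Nv/(40*M^2))^10 * E^10/(a1*b2)^9 * pm := by
    have e1 : pm/sp/(10^15*M^20) * (E^10/(A*B)^9) =
        (pm*E^10)/(sp*(10^15*M^20)*(A*B)^9) := by
      field_simp
      try ring
    have e2 : (Nv/(40*M^2))^10 * E^10/(a1*b2)^9 * pm =
        (Nv^10*E^10*pm)/((40*M^2)^10*(a1*b2)^9) := by
      rw [div_pow]
      field_simp
      try ring
    rw [e1, e2, div_le_div_iff₀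
      (mul_pos (mul_pos hsp (mul_pos (by norm_num) (pow_pos hM0 20)))
        (pow_pos (mul_pos hA hB) 9))
      (mul_pos (pow_pos hM2 10) (pow_pos (mul_pos ha1 hb2) 9))]
    calc pm*E^10 * ((40*M^2)^10*(a1*b2)^9) = (40^10*(a1*b2)^9) * (pm*E^10*M^20) := by ring
      _ ≤ ((Nv^10*sp*10^15)*(A*B)^9) * (pm*E^10*M^20) :=
          mul_le_mul_of_nonneg_right key'
            (mul_nonneg (mul_nonneg hpm (pow_nonneg hE.le 10)) (pow_nonneg hM0.le 20))
      _ = (Nv^10*E^10*pm)*(sp*(10^15*M^20)*(A*B)^9) := by ring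
  calc pm/sp/(10^15*M^20) * (E^10/(A*B)^9 * Pi)
      = pm/sp/(10^15*M^20) * (E^10/(A*B)^9) * Pi := by ring
    _ ≤ (Nv/(40*M^2))^10*E^10/(a1*b2)^9*pm * Pi := mul_le_mul_of_nonneg_right step2 hPi
    _ ≤ E1^10/(a1*b2)^9*Fp * Pi := by
        apply mul_le_mul_of_nonneg_right _ hPi
        have hinv : (0:ℝ) ≤ ((a1*b2)^9)⁻¹ :=
          inv_nonneg.mpr (pow_nonneg (mul_pos ha1 hb2).le 9)
        have e3 : (Nv/(40*M^2))^10*E^10/(a1*b2)^9*pm =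
            ((Nv/(40*M^2))^10*E^10) * (((a1*b2)^9)⁻¹*pm) := by ring
        have e4 : E1^10/(a1*b2)^9*Fp = E1^10 * (((a1*b2)^9)⁻¹*Fp) := by ring
        rw [e3, e4]
        apply mul_le_mul hE10 (mul_le_mul_of_nonneg_left hFp hinv)
          (mul_nonneg hinv hpm) (pow_nonneg hE1 10)
    _ = E1^10/(a1*b2)^9*(Fp*Pi) := by ring

end Aux4


lemma rpow_natCast_sub_half (p m : ℕ) (hp2 : (2:ℝ) ≤ (p:ℝ)) :
    (p:ℝ) ^ (((m : ℕ) : ℝ) - 1/2) = (p:ℝ) ^ m / Real.sqrt p := by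
  rw [Real.rpow_sub (by linarith : (0:ℝ) < (p:ℝ)), Real.rpow_natCast]
  rw [Real.sqrt_eq_rpow]

set_option maxHeartbeats 400000 in
theorem quality_density_step (G : GCDGraph) (h : 0 < G.density)
    (p : ℕ) (hp : p ∈ G.RSharp) (k l : ℕ)
    (hα : 0 < G.muVpk p k / G.muV) (hβ : 0 < G.muWpk p l / G.muW)
    (heq : k = l →
      (G.muVpk p k / G.muV * (G.muWpk p k / G.muW)) ^ ((9 : ℝ) / 10) ≤
        G.muEpkl p k l / G.muE)
    (hne : k ≠ l →
      (G.muVpk p k / G.muV * (1 - G.muWpk p k / G.muW) +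
        G.muWpk p k / G.muW * (1 - G.muVpk p k / G.muV) +
        G.muVpk p l / G.muV * (1 - G.muWpk p l / G.muW) +
        G.muWpk p l / G.muW * (1 - G.muVpk p l / G.muV)) /
          (40 * ((k : ℝ) - (l : ℝ)) ^ 2) ≤
        G.muEpkl p k l / G.muE) :
    ∃ G' : GCDGraph, G'.IsSubgraph G ∧
      G'.P = insert p G.P ∧
      G'.RSet ⊆ G.RSet \ {p} ∧
      (k = l → 1 ≤ G'.density / G.density ∧ 1 ≤ G'.quality / G.quality) ∧
      (k ≠ l →
        1 / (20 * ((k : ℝ) - (l : ℝ)) ^ 2) ≤ G'.density / G.density ∧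
        (p : ℝ) ^ (|(k : ℝ) - (l : ℝ)| - 1 / 2) / (10 ^ 15 * |(k : ℝ) - (l : ℝ)| ^ 20) ≤
          G'.quality / G.quality) := by
  obtain ⟨hpR, hsharp⟩ := hp
  obtain ⟨hprime, hpP, -⟩ := hpR
  have hA0 : 0 ≤ G.muV := Finset.sum_nonneg fun i _ => G.mu_nonneg i
  have hB0 : 0 ≤ G.muW := Finset.sum_nonneg fun i _ => G.mu_nonneg i
  have hAB : 0 < G.muV * G.muW := by
    rcases (mul_nonneg hA0 hB0).lt_or_eq with h' | h'
    · exact h'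
    · exfalso; rw [GCDGraph.density, ← h', div_zero] at h; exact lt_irrefl 0 h
  have hA : 0 < G.muV := by nlinarith
  have hB : 0 < G.muW := by nlinarith
  have hE : 0 < G.muE := by
    have h2 := mul_pos h hAB
    rwa [GCDGraph.density, div_mul_cancel₀ _ (ne_of_gt hAB)] at h2
  have ha1 : 0 < G.muVpk p k := by
    have h2 := mul_pos hα hA
    rwa [div_mul_cancel₀ _ (ne_of_gt hA)] at h2
  have hb2 : 0 < G.muWpk p l := by
    have h2 := mul_pos hβ hB
    rwa [div_mul_cancel₀ _ (ne_of_gt hB)] at h2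
  have ha1le : G.muVpk p k ≤ G.muV :=
    Finset.sum_le_sum_of_subset_of_nonneg (Finset.filter_subset _ _) fun i _ _ => G.mu_nonneg i
  have hb2le : G.muWpk p l ≤ G.muW :=
    Finset.sum_le_sum_of_subset_of_nonneg (Finset.filter_subset _ _) fun i _ _ => G.mu_nonneg i
  have hb1nn : 0 ≤ G.muWpk p k := Finset.sum_nonneg fun i _ => G.mu_nonneg i
  have ha2nn : 0 ≤ G.muVpk p l := Finset.sum_nonneg fun i _ => G.mu_nonneg i
  have hE1nn : 0 ≤ G.muEpkl p k l :=
    Finset.sum_nonneg fun e _ => mul_nonneg (G.mu_nonneg _) (G.mu_nonneg _)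
  have hp2 : (2:ℝ) ≤ (p:ℝ) := by exact_mod_cast hprime.two_le
  have hsp : Real.sqrt 2 ≤ Real.sqrt p := Real.sqrt_le_sqrt hp2
  have hsp0 : 0 < Real.sqrt (p:ℝ) := Real.sqrt_pos.mpr (by linarith)
  have hPi : 0 < ∏ q ∈ G.P, Fq G q := prodFq_pos G
  have hqG : 0 < G.quality := by
    rw [quality_eq]
    exact mul_pos (div_pos (pow_pos hE 10) (pow_pos hAB 9)) hPi
  refine ⟨stepGraph G p k l hprime hpP,
    ⟨rfl, Finset.filter_subset _ _, Finset.filter_subset _ _, Finset.filter_subset _ _,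
      Finset.subset_insert _ _, fun q hq => ?_⟩, rfl, ?_, ?_, ?_⟩
  · have hqp : q ≠ p := fun hh => hpP (hh ▸ hq)
    constructor <;> simp [stepGraph, hqp]
  · rintro q ⟨hq1, hq2, e, he, hdvd⟩
    have hqp : q ≠ p := by
      rintro rfl
      exact hq2 (Finset.mem_insert_self q G.P)
    exact ⟨⟨hq1, fun hqP => hq2 (Finset.mem_insert_of_mem hqP), e,
      Finset.mem_of_mem_filter e he, hdvd⟩, hqp⟩
  · -- the diagonal case k = l
    intro hkl
    subst hkl
    have hteq := heq rfl
    have ht1 : G.muVpk p k / G.muV * (G.muWpk p k / G.muW) ≤ 1 := by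
      have e1 : G.muVpk p k / G.muV ≤ 1 := (div_le_one hA).mpr ha1le
      have e2 : G.muWpk p k / G.muW ≤ 1 := (div_le_one hB).mpr hb2le
      nlinarith
    have hFp : 1 ≤ Fq (stepGraph G p k k hprime hpP) p := by
      rw [Fq_stepGraph_self]
      simp only [max_self, min_self, Nat.sub_self, pow_zero]
      rw [le_div_iff₀ (den_pos p hp2 _), one_mul]
      exact den_le_one p hp2 _
    constructor
    · rw [one_le_div h]
      have hd' : (stepGraph G p k k hprime hpP).density =
          G.muEpkl p k k / (G.muVpk p k * G.muWpk p k) := rfl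
      rw [hd', GCDGraph.density]
      exact density_final_eq _ _ _ _ _ _ hE hA hB ha1 hb2 ht1 hteq
    · rw [one_le_div hqG, quality_eq, stepGraph_quality]
      exact quality_final_eq _ _ _ _ _ _ _ _ hE hA hB ha1 hb2 hE1nn hPi.le hFp ht1 hteq
  · -- the off-diagonal case k ≠ l
    intro hkl
    have hcast : ((k:ℝ)) ≠ (l:ℝ) := by exact_mod_cast hkl
    have hD : ((k:ℝ) - (l:ℝ)) ≠ 0 := sub_ne_zero.mpr hcast
    have hD2 : 0 < ((k:ℝ)-(l:ℝ))^2 := by positivity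
    have hsum1 : G.muVpk p k / G.muV + G.muVpk p l / G.muV ≤ 1 := by
      rw [← add_div, div_le_one hA]; exact muVpk_add_le G p k l hkl
    have hsum2 : G.muWpk p k / G.muW + G.muWpk p l / G.muW ≤ 1 := by
      rw [← add_div, div_le_one hB]; exact muWpk_add_le G p k l hkl
    obtain ⟨h3', hkey⟩ := master (Real.sqrt p) (G.muVpk p k / G.muV) (G.muWpk p k / G.muW)
      (G.muVpk p l / G.muV) (G.muWpk p l / G.muW) hsp hα hβ
      (div_nonneg hb1nn hB0) (div_nonneg ha2nn hA0) hsum1 hsum2 (hsharp k) (hsharp l)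
    have hNv : 0 < G.muVpk p k / G.muV * (1 - G.muWpk p k / G.muW) +
        G.muWpk p k / G.muW * (1 - G.muVpk p k / G.muV) +
        G.muVpk p l / G.muV * (1 - G.muWpk p l / G.muW) +
        G.muWpk p l / G.muW * (1 - G.muVpk p l / G.muV) :=
      lt_of_lt_of_le (mul_pos two_pos (mul_pos hα hβ)) h3'
    have hneh := hne hkl
    constructor
    · have hd' : (stepGraph G p k l hprime hpP).density =
          G.muEpkl p k l / (G.muVpk p k * G.muWpk p l) := rfl
      rw [hd', GCDGraph.density]
      exact density_final _ _ _ _ _ _ _ _ hE hA hB ha1 hb2 hD2 h3' hneh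
    · have habs : |(k:ℝ)-(l:ℝ)| = ((max k l - min k l : ℕ) : ℝ) := by
        rcases le_total k l with h' | h'
        · rw [max_eq_right h', min_eq_left h', abs_sub_comm,
            abs_of_nonneg (sub_nonneg.mpr (by exact_mod_cast h'))]
          push_cast [h']
          ring
        · rw [max_eq_left h', min_eq_right h',
            abs_of_nonneg (sub_nonneg.mpr (by exact_mod_cast h'))]
          push_cast [h']
          ring
      have hmm : 1 ≤ max k l - min k l := by
        rcases le_total k l with h' | h' <;>
          [rw [max_eq_right h', min_eq_left h']; rw [max_eq_left h', min_eq_right h']] <;>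
          omega
      have hM1 : (1:ℝ) ≤ ((max k l - min k l : ℕ) : ℝ) := by exact_mod_cast hmm
      have hD2M : ((k:ℝ)-(l:ℝ))^2 = ((max k l - min k l : ℕ) : ℝ)^2 := by
        rw [← sq_abs, habs]
      rw [hD2M] at hneh
      rw [habs, le_div_iff₀ hqG, quality_eq, stepGraph_quality]
      rw [rpow_natCast_sub_half p (max k l - min k l) hp2]
      have hp1 : (1:ℝ) < (p:ℝ) := lt_of_lt_of_le one_lt_two hp2
      have hrp1 : (p : ℝ) ^ (-(31 : ℝ) / 30) < 1 :=
        Real.rpow_lt_one_of_one_lt_of_neg hp1 (by norm_num)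
      have hrp0 : 0 < (p : ℝ) ^ (-(31 : ℝ) / 30) :=
        Real.rpow_pos_of_pos (lt_trans one_pos hp1) _
      have hFp : (p:ℝ) ^ (max k l - min k l) ≤ Fq (stepGraph G p k l hprime hpP) p := by
        rw [Fq_stepGraph_self, if_neg (fun hc => hkl hc.1), sub_zero, one_pow, one_mul]
        rw [le_div_iff₀ (pow_pos (sub_pos.mpr hrp1) 10)]
        apply mul_le_of_le_one_right (by positivity)
        exact pow_le_one₀ (sub_nonneg.mpr hrp1.le) (sub_le_self _ hrp0.le)
      exact quality_final G.muE G.muV G.muW (G.muVpk p k) (G.muWpk p l) (G.muEpkl p k l)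
        (G.muVpk p k / G.muV * (1 - G.muWpk p k / G.muW) +
          G.muWpk p k / G.muW * (1 - G.muVpk p k / G.muV) +
          G.muVpk p l / G.muV * (1 - G.muWpk p l / G.muW) +
          G.muWpk p l / G.muW * (1 - G.muVpk p l / G.muV))
        ((max k l - min k l : ℕ) : ℝ) (Real.sqrt p) ((p:ℝ) ^ (max k l - min k l))
        (Fq (stepGraph G p k l hprime hpP) p) (∏ q ∈ G.P, Fq G q)
        hE hA hB ha1 hb2 hE1nn hM1 hsp0 (by positivity) hPi.le hNv hneh hkey hFp
end

section
/- Let ψ: ℕ → [0,1/2], let 𝒜_q = ⋃_{1≤p≤q, gcd(p,q)=1} (p/q − ψ(q)/q, p/q + ψ(q)/q), and let D(q,r) = max(r·ψ(q), q·ψ(r))/gcd(q,r). If q ≠ r are positive integers with D(q,r) < 1/2, then 𝒜_q ∩ 𝒜_r = ∅. -/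
open Finset

/-- The set `𝒜_q` of reals within `ψ(q)/q` of a reduced fraction with denominator `q`. -/
noncomputable def Aset (ψ : ℕ → ℝ) (q : ℕ) : Set ℝ :=
  ⋃ p ∈ (Finset.Icc 1 q).filter (fun p => Nat.gcd p q = 1),
    Set.Ioo ((p : ℝ) / q - ψ q / q) ((p : ℝ) / q + ψ q / q)

/-- `D(q,r) = max(r ψ(q), q ψ(r)) / gcd(q,r)`. -/
noncomputable def Dfun (ψ : ℕ → ℝ) (q r : ℕ) : ℝ :=
  max ((r : ℝ) * ψ q) ((q : ℝ) * ψ r) / (Nat.gcd q r : ℝ)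

/-!
If `x` lies in the intervals around the distinct reduced fractions `p / q` and `p' / r`, then
`|p r - p' q| < r ψ(q) + q ψ(r) ≤ 2 max(r ψ(q), q ψ(r)) < gcd(q, r)`; but `p r - p' q` is a
nonzero multiple of `gcd(q, r)`.
-/

theorem exists_coprime_of_mem_Aset {ψ : ℕ → ℝ} {q : ℕ} {x : ℝ} (hx : x ∈ Aset ψ q) :
    ∃ p : ℕ, 0 < q ∧ p.Coprime q ∧ |x * q - p| < ψ q := by
  simp only [Aset, Set.mem_iUnion, mem_filter, mem_Icc, Set.mem_Ioo, exists_prop] at hx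
  obtain ⟨p, ⟨⟨hp, hpq⟩, hcop⟩, hlow, hupp⟩ := hx
  have hq : 0 < q := by omega
  have hq' : (0 : ℝ) < q := by exact_mod_cast hq
  refine ⟨p, hq, hcop, abs_sub_lt_iff.mpr ⟨?_, ?_⟩⟩
  · rw [← add_div, lt_div_iff₀ hq'] at hupp
    linarith
  · rw [← sub_div, div_lt_iff₀ hq'] at hlow
    linarith

theorem eq_of_coprime_of_mul_eq_mul {p q p' r : ℕ} (hp : p.Coprime q) (hp' : p'.Coprime r)
    (h : p * r = p' * q) : q = r :=
  Nat.dvd_antisymm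
    (hp.symm.dvd_of_dvd_mul_left ⟨p', h.trans (mul_comm _ _)⟩)
    (hp'.symm.dvd_of_dvd_mul_left ⟨p, h.symm.trans (mul_comm _ _)⟩)

theorem gcd_le_abs_mul_sub_mul {p q p' r : ℕ} (h : p * r ≠ p' * q) :
    (Nat.gcd q r : ℝ) ≤ |(p : ℝ) * r - p' * q| := by
  have hne : (p : ℤ) * r - p' * q ≠ 0 := sub_ne_zero.mpr (by exact_mod_cast h)
  have hdvd : (Nat.gcd q r : ℤ) ∣ (p : ℤ) * r - p' * q :=
    dvd_sub (dvd_mul_of_dvd_right (Int.natCast_dvd_natCast.mpr (Nat.gcd_dvd_right q r)) _)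
      (dvd_mul_of_dvd_right (Int.natCast_dvd_natCast.mpr (Nat.gcd_dvd_left q r)) _)
  have := Int.le_of_dvd (abs_pos.mpr hne) ((dvd_abs _ _).mpr hdvd)
  exact_mod_cast this

theorem add_lt_gcd_of_Dfun_lt_half {ψ : ℕ → ℝ} {q r : ℕ} (hq : 0 < q)
    (hD : Dfun ψ q r < 1 / 2) : r * ψ q + q * ψ r < Nat.gcd q r := by
  have hgcd : (0 : ℝ) < Nat.gcd q r := by exact_mod_cast Nat.gcd_pos_of_pos_left r hq
  rw [Dfun, div_lt_iff₀ hgcd] at hD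
  linarith [le_max_left ((r : ℝ) * ψ q) (q * ψ r), le_max_right ((r : ℝ) * ψ q) (q * ψ r)]

theorem disjoint_if_D_small_general
    (ψ : ℕ → ℝ)
    (q r : ℕ) (hqr : q ≠ r)
    (hD : Dfun ψ q r < 1 / 2) :
    Aset ψ q ∩ Aset ψ r = ∅ := by
  rw [Set.eq_empty_iff_forall_notMem]
  rintro x ⟨hxq, hxr⟩
  obtain ⟨p, hq, hp, hxp⟩ := exists_coprime_of_mem_Aset hxq
  obtain ⟨p', hr, hp', hxp'⟩ := exists_coprime_of_mem_Aset hxr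
  have hgcd := gcd_le_abs_mul_sub_mul fun h ↦ hqr (eq_of_coprime_of_mul_eq_mul hp hp' h)
  have hq' : (0 : ℝ) < q := by exact_mod_cast hq
  have hr' : (0 : ℝ) < r := by exact_mod_cast hr
  have hdist : |(p : ℝ) * r - p' * q| < r * ψ q + q * ψ r :=
    calc |(p : ℝ) * r - p' * q| = |r * -(x * q - p) + q * (x * r - p')| := by congr 1; ring
      _ ≤ r * |x * q - p| + q * |x * r - p'| := by
        grw [abs_add_le, abs_mul, abs_mul, abs_neg, abs_of_pos hq', abs_of_pos hr']
      _ < r * ψ q + q * ψ r := by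
        gcongr
  linarith [add_lt_gcd_of_Dfun_lt_half hq hD]

theorem disjoint_if_D_small
    (ψ : ℕ → ℝ) (hψ : ∀ n, ψ n ∈ Set.Icc (0 : ℝ) (1 / 2))
    (q r : ℕ) (hq : 0 < q) (hr : 0 < r) (hqr : q ≠ r)
    (hD : Dfun ψ q r < 1 / 2) :
    Aset ψ q ∩ Aset ψ r = ∅ :=
  disjoint_if_D_small_general ψ q r hqr hD
end

section
/- Let C > 4 be a constant and let ψ: ℕ → [0,1/2] with ∑_{q=1}^∞ φ(q)ψ(q)/q = ∞; set Ψ(Q) = ∑_{q=1}^Q 2φ(q)ψ(q)/q and let 𝒜_q = ⋃_{1≤p≤q, gcd(p,q)=1} (p/q − ψ(q)/q, p/q + ψ(q)/q). Assume the variance bound: for all Q with Ψ(Q) ≥ 2, ∫_0^1 (∑_{q=1}^Q 𝟙_{𝒜_q}(α) − Ψ(Q))² dα = O(Ψ(Q)²/(log Ψ(Q))^C). Then for almost all α ∈ [0,1] there exists Q₀ = Q₀(α) such that for all Q ≥ Q₀, |∑_{q=1}^Q 𝟙_{𝒜_q}(α) − Ψ(Q)| = O(Ψ(Q)/(log Ψ(Q))^{√C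 − 1}). -/
open MeasureTheory Finset

/-- `Ψ(Q) = ∑_{q=1}^Q 2 φ(q) ψ(q) / q`. -/
noncomputable def PsiSum (ψ : ℕ → ℝ) (Q : ℕ) : ℝ :=
  ∑ q ∈ Finset.Icc 1 Q, 2 * (Nat.totient q : ℝ) * ψ q / q

lemma measurableSet_Aset (ψ : ℕ → ℝ) (q : ℕ) : MeasurableSet (Aset ψ q) :=
  (Finset.measurableSet_biUnion _ fun _ _ => measurableSet_Ioo)

noncomputable def Sfun (ψ : ℕ → ℝ) (Q : ℕ) (α : ℝ) : ℝ :=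
  ∑ q ∈ Finset.Icc 1 Q, Set.indicator (Aset ψ q) (fun _ => (1 : ℝ)) α

lemma Sfun_measurable (ψ : ℕ → ℝ) (Q : ℕ) : Measurable (Sfun ψ Q) :=
  Finset.measurable_sum _ fun q _ =>
    (measurable_const.indicator (measurableSet_Aset ψ q))

lemma Sfun_nonneg (ψ : ℕ → ℝ) (Q : ℕ) (α : ℝ) : 0 ≤ Sfun ψ Q α :=
  Finset.sum_nonneg fun q _ => Set.indicator_nonneg (fun _ _ => zero_le_one) _

lemma Sfun_le (ψ : ℕ → ℝ) (Q : ℕ) (α : ℝ) : Sfun ψ Q α ≤ Q := by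
  calc Sfun ψ Q α ≤ ∑ _q ∈ Finset.Icc 1 Q, (1 : ℝ) :=
        Finset.sum_le_sum fun q _ => Set.indicator_le_self' (fun _ _ => zero_le_one) α
    _ ≤ Q := by simp [Nat.card_Icc]

lemma Sfun_mono (ψ : ℕ → ℝ) {Q Q' : ℕ} (h : Q ≤ Q') (α : ℝ) :
    Sfun ψ Q α ≤ Sfun ψ Q' α :=
  Finset.sum_le_sum_of_subset_of_nonneg (Finset.Icc_subset_Icc_right h)
    (fun q _ _ => Set.indicator_nonneg (fun _ _ => zero_le_one) _)

lemma psiterm_mem (ψ : ℕ → ℝ) (hψ : ∀ q, ψ q ∈ Set.Icc (0 : ℝ) (1 / 2)) (q : ℕ) :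
    2 * (Nat.totient q : ℝ) * ψ q / q ∈ Set.Icc (0:ℝ) 1 := by
  rcases Nat.eq_zero_or_pos q with rfl | hq
  · simp
  obtain ⟨h0, h1⟩ := hψ q
  have hq' : (0:ℝ) < q := by exact_mod_cast hq
  constructor
  · positivity
  · rw [div_le_one hq']
    have htot : (Nat.totient q : ℝ) ≤ q := by exact_mod_cast Nat.totient_le q
    nlinarith [Nat.cast_nonneg (α := ℝ) (Nat.totient q)]

lemma PsiSum_mono (ψ : ℕ → ℝ) (hψ : ∀ q, ψ q ∈ Set.Icc (0 : ℝ) (1 / 2))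
    {Q Q' : ℕ} (h : Q ≤ Q') : PsiSum ψ Q ≤ PsiSum ψ Q' :=
  Finset.sum_le_sum_of_subset_of_nonneg (Finset.Icc_subset_Icc_right h)
    (fun q _ _ => (psiterm_mem ψ hψ q).1)

lemma PsiSum_succ_le (ψ : ℕ → ℝ) (hψ : ∀ q, ψ q ∈ Set.Icc (0 : ℝ) (1 / 2)) (Q : ℕ) :
    PsiSum ψ (Q + 1) ≤ PsiSum ψ Q + 1 := by
  unfold PsiSum
  rw [show Finset.Icc 1 (Q+1) = insert (Q+1) (Finset.Icc 1 Q) by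
    ext x; simp [Finset.mem_Icc]; omega, Finset.sum_insert (by simp)]
  linarith [(psiterm_mem ψ hψ (Q+1)).2]

lemma PsiSum_tendsto (ψ : ℕ → ℝ) (hψ : ∀ q, ψ q ∈ Set.Icc (0 : ℝ) (1 / 2))
    (hdiv : ¬ Summable (fun q : ℕ => (Nat.totient q : ℝ) * ψ q / q)) :
    Filter.Tendsto (PsiSum ψ) Filter.atTop Filter.atTop := by
  have hnn : ∀ q : ℕ, 0 ≤ (Nat.totient q : ℝ) * ψ q / q := by
    intro q
    have := (hψ q).1
    positivity
  have hpart : Filter.Tendsto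
      (fun n => ∑ i ∈ Finset.range n, (Nat.totient i : ℝ) * ψ i / i)
      Filter.atTop Filter.atTop :=
    (not_summable_iff_tendsto_nat_atTop_of_nonneg hnn).mp hdiv
  have key : ∀ Q : ℕ, PsiSum ψ Q =
      2 * ∑ i ∈ Finset.range (Q + 1), (Nat.totient i : ℝ) * ψ i / i := by
    intro Q
    unfold PsiSum
    have e1 : ∑ q ∈ Finset.Icc 1 Q, 2 * (Nat.totient q : ℝ) * ψ q / q
        = ∑ q ∈ Finset.range (Q+1), 2 * (Nat.totient q : ℝ) * ψ q / q := by
      refine Finset.sum_subset ?_ ?_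
      · intro x hx
        simp only [Finset.mem_Icc] at hx
        exact Finset.mem_range.mpr (by omega)
      · intro x hx hx'
        have : x = 0 := by
          simp only [Finset.mem_range, Finset.mem_Icc] at hx hx'
          omega
        simp [this]
    rw [e1, Finset.mul_sum]
    exact Finset.sum_congr rfl fun q _ => by ring
  have := ((hpart.comp (Filter.tendsto_add_atTop_nat 1)).const_mul_atTop
    (by norm_num : (0:ℝ) < 2))
  refine this.congr fun Q => (key Q).symm

lemma exp_sub_one_le (x : ℝ) : Real.exp x - 1 ≤ x * Real.exp x := by
  have h1 : -x + 1 ≤ Real.exp (-x) := by linarith [Real.add_one_le_exp (-x)]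
  have h2 : Real.exp x * (1 - x) ≤ Real.exp x * Real.exp (-x) :=
    mul_le_mul_of_nonneg_left (by linarith) (Real.exp_pos x).le
  rw [← Real.exp_add, add_neg_cancel, Real.exp_zero] at h2
  nlinarith

lemma rpow_add_one_le (x a : ℝ) (hx : 1 ≤ x) (ha0 : 0 ≤ a) (ha1 : a ≤ 1) :
    (x + 1) ^ a ≤ x ^ a + a * x ^ (a - 1) := by
  have hx0 : (0:ℝ) < x := lt_of_lt_of_le one_pos hx
  have h1 : (x + 1) ^ a = x ^ a * (1 + 1/x) ^ a := by
    rw [← Real.mul_rpow hx0.le (by positivity)]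
    congr 1
    field_simp
  have h2 : (1 + 1/x) ^ a ≤ 1 + a * (1/x) :=
    rpow_one_add_le_one_add_mul_self (by nlinarith [one_div_pos.mpr hx0]) ha0 ha1
  have h3 : x ^ (a - 1) = x ^ a / x := by
    rw [Real.rpow_sub hx0, Real.rpow_one]
  calc (x + 1) ^ a = x ^ a * (1 + 1/x) ^ a := h1
    _ ≤ x ^ a * (1 + a * (1/x)) := by
        have := Real.rpow_nonneg hx0.le a
        nlinarith
    _ = x ^ a + a * x ^ (a - 1) := by rw [h3]; field_simp

lemma chebyshev (ψ : ℕ → ℝ) (Q : ℕ) (ε B : ℝ) (hε : 0 < ε)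
    (hB : (∫ α in (0:ℝ)..1, (Sfun ψ Q α - PsiSum ψ Q) ^ 2) ≤ B) :
    (volume.restrict (Set.Ioc (0:ℝ) 1))
      {α | ε ≤ |Sfun ψ Q α - PsiSum ψ Q|} ≤ ENNReal.ofReal (B / ε ^ 2) := by
  set μ := volume.restrict (Set.Ioc (0:ℝ) 1) with hμ
  set f : ℝ → ℝ := fun α => (Sfun ψ Q α - PsiSum ψ Q) ^ 2 with hf
  have hmeas : Measurable f := ((Sfun_measurable ψ Q).sub measurable_const).pow_const 2
  have hint : Integrable f μ := by
    refine (integrable_const ((Q + |PsiSum ψ Q|) ^ 2)).mono'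
      hmeas.aestronglyMeasurable ?_
    refine Filter.Eventually.of_forall fun α => ?_
    have h1 : |Sfun ψ Q α - PsiSum ψ Q| ≤ Q + |PsiSum ψ Q| := by
      have h2 : |Sfun ψ Q α| ≤ Q := abs_le.mpr
        ⟨by linarith [Sfun_nonneg ψ Q α, Nat.cast_nonneg (α := ℝ) Q], Sfun_le ψ Q α⟩
      calc |Sfun ψ Q α - PsiSum ψ Q| ≤ |Sfun ψ Q α| + |PsiSum ψ Q| := abs_sub _ _
        _ ≤ Q + |PsiSum ψ Q| := by linarith
    have hfα : ‖f α‖ = |Sfun ψ Q α - PsiSum ψ Q| ^ 2 := by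
      rw [hf]; simp [abs_pow, sq_abs]
    rw [hfα]
    exact pow_le_pow_left₀ (abs_nonneg _) h1 2
  have hIeq : (∫ α, f α ∂μ) = ∫ α in (0:ℝ)..1, (Sfun ψ Q α - PsiSum ψ Q) ^ 2 := by
    rw [intervalIntegral.integral_of_le (by norm_num : (0:ℝ) ≤ 1)]
  have hcheb := mul_meas_ge_le_integral_of_nonneg
    (Filter.Eventually.of_forall fun α => sq_nonneg _ : 0 ≤ᵐ[μ] f) hint (ε ^ 2)
  have hsub : {α | ε ≤ |Sfun ψ Q α - PsiSum ψ Q|} ⊆ {x | ε ^ 2 ≤ f x} := by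
    intro x hx
    simp only [Set.mem_setOf_eq] at hx ⊢
    calc ε ^ 2 ≤ |Sfun ψ Q x - PsiSum ψ Q| ^ 2 := pow_le_pow_left₀ hε.le hx 2
      _ = f x := by rw [hf]; simp [sq_abs]
  have hfin : μ {x | ε ^ 2 ≤ f x} ≠ ⊤ := by
    rw [hμ]
    exact (measure_lt_top _ _).ne
  have htr : (μ {x | ε ^ 2 ≤ f x}).toReal ≤ B / ε ^ 2 := by
    rw [le_div_iff₀ (by positivity)]
    calc (μ {x | ε ^ 2 ≤ f x}).toReal * ε ^ 2
        = ε ^ 2 * (μ {x | ε ^ 2 ≤ f x}).toReal := by ring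
      _ ≤ ∫ α, f α ∂μ := hcheb
      _ ≤ B := by rw [hIeq]; exact hB
  calc μ {α | ε ≤ |Sfun ψ Q α - PsiSum ψ Q|} ≤ μ {x | ε ^ 2 ≤ f x} := measure_mono hsub
    _ = ENNReal.ofReal ((μ {x | ε ^ 2 ≤ f x}).toReal) := (ENNReal.ofReal_toReal hfin).symm
    _ ≤ ENNReal.ofReal (B / ε ^ 2) := ENNReal.ofReal_le_ofReal htr

set_option maxHeartbeats 4000000 in
theorem variance_implies_counting
    (C : ℝ) (hC : 4 < C)
    (ψ : ℕ → ℝ) (hψ : ∀ q, ψ q ∈ Set.Icc (0 : ℝ) (1 / 2))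
    (hdiv : ¬ Summable (fun q : ℕ => (Nat.totient q : ℝ) * ψ q / q))
    (hvar : ∃ K : ℝ, ∀ Q : ℕ, 2 ≤ PsiSum ψ Q →
      (∫ α in (0 : ℝ)..1,
        ((∑ q ∈ Finset.Icc 1 Q, Set.indicator (Aset ψ q) (fun _ => (1 : ℝ)) α)
          - PsiSum ψ Q) ^ 2)
        ≤ K * (PsiSum ψ Q ^ 2 / Real.log (PsiSum ψ Q) ^ C)) :
    ∃ K' : ℝ, ∀ᵐ α ∂(volume.restrict (Set.Icc (0 : ℝ) 1)), ∃ Q₀ : ℕ, ∀ Q : ℕ, Q₀ ≤ Q →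
      |(∑ q ∈ Finset.Icc 1 Q, Set.indicator (Aset ψ q) (fun _ => (1 : ℝ)) α)
          - PsiSum ψ Q|
        ≤ K' * (PsiSum ψ Q / Real.log (PsiSum ψ Q) ^ (Real.sqrt C - 1)) := by
  classical
  obtain ⟨K, hvar⟩ := hvar
  have hC0 : (0:ℝ) ≤ C := by linarith
  set s := Real.sqrt C with hsdef
  have hsC : s ^ 2 = C := Real.sq_sqrt hC0
  have hs2 : 2 < s := by
    have h4 : Real.sqrt 4 < Real.sqrt C := Real.sqrt_lt_sqrt (by norm_num) hC
    have h42 : Real.sqrt 4 = 2 := by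
      rw [show (4:ℝ) = 2 ^ 2 by norm_num, Real.sqrt_sq (by norm_num)]
    rw [h42] at h4
    exact h4
  have hs0 : 0 < s := by linarith
  set a := 1 / s with hadef
  set γ := s - 1 with hγdef
  have ha0 : 0 < a := by positivity
  have ha1 : a < 1 := by rw [hadef, div_lt_one hs0]; linarith
  have hγ0 : 0 < γ := by rw [hγdef]; linarith
  have haγ : a * γ = 1 - a := by rw [hadef, hγdef]; field_simp
  set u : ℕ → ℝ := fun n => Real.exp ((n:ℝ) ^ a) with hudef
  have hu_pos : ∀ n, 0 < u n := fun n => Real.exp_pos _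
  have hu_mono : Monotone u := fun m n h => Real.exp_le_exp.mpr
    (Real.rpow_le_rpow (Nat.cast_nonneg m) (Nat.cast_le.mpr h) ha0.le)
  have hna : ∀ n : ℕ, 1 ≤ n → 1 ≤ (n:ℝ) ^ a := fun n hn =>
    Real.one_le_rpow (by exact_mod_cast hn) ha0.le
  have hu2 : ∀ n : ℕ, 1 ≤ n → 2 ≤ u n := by
    intro n hn
    have h1 : Real.exp 1 ≤ u n := by
      simp only [hudef]
      exact Real.exp_le_exp.mpr (hna n hn)
    linarith [Real.add_one_le_exp 1]
  have hΨ := PsiSum_tendsto ψ hψ hdiv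
  have hex : ∀ x : ℝ, ∃ Q, x ≤ PsiSum ψ Q := fun x => (hΨ.eventually_ge_atTop x).exists
  have hPsi0 : PsiSum ψ 0 = 0 := by simp [PsiSum]
  have hu_tendsto : Filter.Tendsto u Filter.atTop Filter.atTop :=
    Real.tendsto_exp_atTop.comp ((tendsto_rpow_atTop ha0).comp
      tendsto_natCast_atTop_atTop)
  obtain ⟨Qn, hQspec, hQpos, hQupper, hQmono, hQbig⟩ :
      ∃ Qn : ℕ → ℕ, (∀ n, u n ≤ PsiSum ψ (Qn n)) ∧ (∀ n, 0 < Qn n) ∧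
        (∀ n, PsiSum ψ (Qn n) ≤ u n + 1) ∧ Monotone Qn ∧ (∀ Q : ℕ, ∃ m, Q < Qn m) := by
    have hpos : ∀ n, 0 < Nat.find (hex (u n)) := by
      intro n
      rcases Nat.eq_zero_or_pos (Nat.find (hex (u n))) with h | h
      · exfalso
        have hsp := Nat.find_spec (hex (u n))
        rw [h, hPsi0] at hsp
        linarith [hu_pos n]
      · exact h
    have hupper : ∀ n, PsiSum ψ (Nat.find (hex (u n))) ≤ u n + 1 := by
      intro n
      have hlt : Nat.find (hex (u n)) - 1 < Nat.find (hex (u n)) :=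
        Nat.sub_lt (hpos n) one_pos
      have hmin := Nat.find_min (hex (u n)) hlt
      push_neg at hmin
      have hstep := PsiSum_succ_le ψ hψ (Nat.find (hex (u n)) - 1)
      rw [Nat.sub_add_cancel (hpos n)] at hstep
      linarith
    have hbig : ∀ Q : ℕ, ∃ m, Q < Nat.find (hex (u m)) := by
      intro Q
      obtain ⟨m, hm⟩ := (hu_tendsto.eventually_ge_atTop (PsiSum ψ Q + 1)).exists
      refine ⟨m, ?_⟩
      by_contra h
      push_neg at h
      have := PsiSum_mono ψ hψ h
      linarith [Nat.find_spec (hex (u m))]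
    exact ⟨fun n => Nat.find (hex (u n)), fun n => Nat.find_spec (hex (u n)), hpos, hupper,
      fun m n h => Nat.find_min' (hex (u m)) (le_trans (hu_mono h) (Nat.find_spec (hex (u n)))), hbig⟩
  set εf : ℕ → ℝ := fun m => PsiSum ψ (Qn m) / Real.log (PsiSum ψ (Qn m)) ^ γ with hεdef
  have hidx : ∀ m : ℕ, 1 ≤ m → (2:ℝ) ≤ PsiSum ψ (Qn m) :=
    fun m hm => le_trans (hu2 m hm) (hQspec m)
  have hlog_lb : ∀ m : ℕ, (m:ℝ) ^ a ≤ Real.log (PsiSum ψ (Qn m)) := by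
    intro m
    have h := Real.log_le_log (hu_pos m) (hQspec m)
    simp only [hudef, Real.log_exp] at h
    exact h
  have hlog1 : ∀ m : ℕ, 1 ≤ m → 1 ≤ Real.log (PsiSum ψ (Qn m)) :=
    fun m hm => (hna m hm).trans (hlog_lb m)
  set μ := volume.restrict (Set.Ioc (0:ℝ) 1) with hμdef
  set K₀ := max K 0 with hK₀def
  set β := a * (C - 2*γ) with hβdef
  have hC2γ : 0 ≤ C - 2*γ := by
    rw [hγdef, ← hsC]; nlinarith [sq_nonneg (s - 1)]
  have hβ1 : 1 < β := by
    have hβeq : β = (s^2 - 2*s + 2)/s := by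
      rw [hβdef, hadef, hγdef, ← hsC]; field_simp; ring
    rw [hβeq, lt_div_iff₀ hs0]
    nlinarith
  -- measure bound for the bad events
  have hmeasb : ∀ m : ℕ, 1 ≤ m →
      μ {α | εf m ≤ |Sfun ψ (Qn m) α - PsiSum ψ (Qn m)|}
        ≤ ENNReal.ofReal (K₀ * (m:ℝ) ^ (-β)) := by
    intro m hm
    have h2 : 2 ≤ PsiSum ψ (Qn m) := hidx m hm
    have hint := hvar (Qn m) h2
    set Pm := PsiSum ψ (Qn m) with hPm
    set Lm := Real.log Pm with hLm
    have hLm1 : 1 ≤ Lm := hlog1 m hm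
    have hLm0 : 0 < Lm := lt_of_lt_of_le one_pos hLm1
    have hPm0 : 0 < Pm := by linarith
    have hεm : εf m = Pm / Lm ^ γ := by simp only [hεdef]; rfl
    have hεp : 0 < εf m := by rw [hεm]; positivity
    have hch := chebyshev ψ (Qn m) (εf m) (K * (Pm^2 / Lm ^ C)) hεp hint
    refine le_trans hch (ENNReal.ofReal_le_ofReal ?_)
    have e1 : εf m ^ 2 = Pm ^ 2 / Lm ^ (2*γ) := by
      rw [hεm, div_pow, ← Real.rpow_natCast (Lm ^ γ) 2, ← Real.rpow_mul hLm0.le]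
      norm_num
      rw [mul_comm]
    have hLC : (0:ℝ) < Lm ^ C := Real.rpow_pos_of_pos hLm0 C
    have hL2γ : (0:ℝ) < Lm ^ (2*γ) := Real.rpow_pos_of_pos hLm0 _
    have e2 : K * (Pm ^ 2 / Lm ^ C) / εf m ^ 2 = K * (Lm ^ (2*γ) / Lm ^ C) := by
      rw [e1]
      field_simp
    rw [e2]
    have e3 : Lm ^ (2*γ) / Lm ^ C = Lm ^ (2*γ - C) := (Real.rpow_sub hLm0 _ _).symm
    rw [e3]
    have hma0 : (0:ℝ) < (m:ℝ) ^ a := Real.rpow_pos_of_pos (by exact_mod_cast hm) a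
    have e4 : Lm ^ (2*γ - C) ≤ ((m:ℝ) ^ a) ^ (2*γ - C) :=
      Real.rpow_le_rpow_of_nonpos hma0 (hlog_lb m) (by linarith)
    have e5 : ((m:ℝ) ^ a) ^ (2*γ - C) = (m:ℝ) ^ (-β) := by
      rw [← Real.rpow_mul (Nat.cast_nonneg m)]
      congr 1
      rw [hβdef]; ring
    calc K * Lm ^ (2*γ - C) ≤ K₀ * Lm ^ (2*γ - C) :=
          mul_le_mul_of_nonneg_right (le_max_left _ _) (Real.rpow_nonneg hLm0.le _)
      _ ≤ K₀ * ((m:ℝ) ^ a) ^ (2*γ - C) :=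
          mul_le_mul_of_nonneg_left e4 (le_max_right _ _)
      _ = K₀ * (m:ℝ) ^ (-β) := by rw [e5]
  -- Borel–Cantelli
  set F : ℕ → Set ℝ := fun k =>
    {α | εf (k+1) ≤ |Sfun ψ (Qn (k+1)) α - PsiSum ψ (Qn (k+1))|} with hFdef
  have hg_nonneg : ∀ k : ℕ, 0 ≤ K₀ * ((k+1:ℕ):ℝ) ^ (-β) := fun k =>
    mul_nonneg (le_max_right _ _) (Real.rpow_nonneg (Nat.cast_nonneg _) _)
  have hgsum : Summable (fun k : ℕ => K₀ * ((k+1:ℕ):ℝ) ^ (-β)) := by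
    have hbase : Summable (fun n : ℕ => (n:ℝ) ^ (-β)) :=
      Real.summable_nat_rpow.mpr (by linarith)
    exact ((summable_nat_add_iff 1).mpr hbase).mul_left K₀
  have htsum : (∑' k, μ (F k)) ≠ ⊤ := by
    have hle : ∀ k, μ (F k) ≤ ENNReal.ofReal (K₀ * ((k+1:ℕ):ℝ) ^ (-β)) :=
      fun k => hmeasb (k+1) (by omega)
    have h1 := ENNReal.tsum_le_tsum hle
    rw [← ENNReal.ofReal_tsum_of_nonneg hg_nonneg hgsum] at h1
    exact ne_top_of_le_ne_top ENNReal.ofReal_ne_top h1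
  have hBC := MeasureTheory.ae_eventually_notMem htsum
  -- the eventual lower bound (E1)
  have hE1 : ∀ᶠ n : ℕ in Filter.atTop, (n:ℝ) ^ (a*γ) ≤ u n := by
    have h1 := tendsto_exp_div_rpow_atTop ((1-a)/a)
    have h2 : Filter.Tendsto (fun n : ℕ => ((n:ℝ))^a) Filter.atTop Filter.atTop :=
      (tendsto_rpow_atTop ha0).comp tendsto_natCast_atTop_atTop
    have h3 := (h1.comp h2).eventually_ge_atTop 1
    filter_upwards [h3, Filter.eventually_ge_atTop 1] with n hn hn1
    have hpos : (0:ℝ) < ((n:ℝ)^a) ^ ((1-a)/a) :=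
      Real.rpow_pos_of_pos (Real.rpow_pos_of_pos (by exact_mod_cast hn1) a) _
    simp only [Function.comp] at hn
    have h4 : ((n:ℝ)^a)^((1-a)/a) ≤ Real.exp ((n:ℝ)^a) := by
      rw [le_div_iff₀ hpos, one_mul] at hn
      exact hn
    have hid : ((n:ℝ)^a)^((1-a)/a) = (n:ℝ)^(a*γ) := by
      rw [← Real.rpow_mul (Nat.cast_nonneg n)]
      congr 1
      rw [haγ]
      field_simp
    rw [hid] at h4
    simpa only [hudef] using h4
  -- conclusion
  refine ⟨3 ^ γ * (3 * Real.exp 1 + 3), ?_⟩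
  rw [← Measure.restrict_congr_set Ioc_ae_eq_Icc]
  rw [← hμdef]
  filter_upwards [hBC] with α hα
  obtain ⟨N₀, hN₀⟩ := Filter.eventually_atTop.mp hα
  obtain ⟨N₁, hN₁⟩ := Filter.eventually_atTop.mp hE1
  set N := max (max (N₀ + 1) N₁) 1 with hNdef
  refine ⟨Qn N, ?_⟩
  intro Q hQ
  have hrwS : ∀ R : ℕ, (∑ q ∈ Finset.Icc 1 R,
      Set.indicator (Aset ψ q) (fun _ => (1:ℝ)) α) = Sfun ψ R α := fun _ => rfl
  rw [hrwS]
  -- locate Q between Qn n and Qn (n+1)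
  have hN1' : 1 ≤ N := le_max_right _ 1
  obtain ⟨n, hnN, hn1, hQn_le, hQlt⟩ :
      ∃ n : ℕ, N ≤ n ∧ 1 ≤ n ∧ Qn n ≤ Q ∧ Q < Qn (n+1) := by
    have hP : ∃ m, Q < Qn m := hQbig Q
    have hNm : N < Nat.find hP := by
      by_contra h
      push_neg at h
      have h2 : Qn (Nat.find hP) ≤ Qn N := hQmono h
      have h3 := Nat.find_spec hP
      omega
    refine ⟨Nat.find hP - 1, by omega, by omega, ?_, ?_⟩
    · have hmin := Nat.find_min hP (show Nat.find hP - 1 < Nat.find hP by omega)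
      push_neg at hmin
      exact hmin
    · have h3 := Nat.find_spec hP
      rwa [Nat.sub_add_cancel (by omega)]
  -- the good events
  have hgn : |Sfun ψ (Qn n) α - PsiSum ψ (Qn n)| < εf n := by
    have h := hN₀ (n-1) (by omega)
    have hidx1 : (n - 1) + 1 = n := by omega
    simp only [hFdef, Set.mem_setOf_eq, hidx1] at h
    push_neg at h
    exact h
  have hgn1 : |Sfun ψ (Qn (n+1)) α - PsiSum ψ (Qn (n+1))| < εf (n+1) := by
    have h := hN₀ n (by omega)
    simp only [hFdef, Set.mem_setOf_eq] at h
    push_neg at h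
    exact h
  -- shorthand
  set P := PsiSum ψ Q with hPdef
  set Pn := PsiSum ψ (Qn n) with hPndef
  set Pn1 := PsiSum ψ (Qn (n+1)) with hPn1def
  set L := Real.log P with hLdef
  set na := (n:ℝ) ^ a with hnadef
  have hcast1 : ((n:ℝ)) ≥ 1 := by exact_mod_cast hn1
  have hna1 : 1 ≤ na := hna n hn1
  have hu_n : u n ≤ Pn := hQspec n
  have hPn_le : Pn ≤ P := PsiSum_mono ψ hψ hQn_le
  have hP_le : P ≤ Pn1 := PsiSum_mono ψ hψ hQlt.le
  have hPn1_ub : Pn1 ≤ u (n+1) + 1 := hQupper (n+1)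
  have hPn2 : 2 ≤ Pn := hidx n hn1
  have hP0 : 0 < P := by linarith
  have hun1 : 1 ≤ u n := by linarith [hu2 n hn1]
  -- rpow facts
  have hδub : ((n:ℝ)+1) ^ a ≤ na + a * (n:ℝ) ^ (a-1) :=
    rpow_add_one_le (n:ℝ) a hcast1 ha0.le ha1.le
  have hpow_le1 : (n:ℝ) ^ (a-1) ≤ 1 :=
    Real.rpow_le_one_of_one_le_of_nonpos hcast1 (by linarith)
  have hpow_pos : (0:ℝ) < (n:ℝ) ^ (a-1) := Real.rpow_pos_of_pos (by linarith) _
  have hmul : a * (n:ℝ) ^ (a-1) ≤ 1 := by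
    have := mul_le_mul ha1.le hpow_le1 hpow_pos.le zero_le_one
    linarith
  have hδ1 : ((n:ℝ)+1) ^ a ≤ na + 1 := by linarith [hδub]
  have hcastn1 : ((n+1:ℕ):ℝ) = (n:ℝ) + 1 := by push_cast; ring
  -- u (n+1) bounds
  have hu_succ_eq : u (n+1) = u n * Real.exp (((n:ℝ)+1)^a - na) := by
    simp only [hudef, hcastn1, ← Real.exp_add]
    congr 1
    ring
  have hδ0 : 0 ≤ ((n:ℝ)+1)^a - na := by
    have := Real.rpow_le_rpow (by linarith : (0:ℝ) ≤ (n:ℝ)) (by linarith : (n:ℝ) ≤ (n:ℝ)+1) ha0.le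
    rw [hnadef]
    linarith
  have hexpδ : Real.exp (((n:ℝ)+1)^a - na) ≤ Real.exp 1 := by
    apply Real.exp_le_exp.mpr
    linarith [hδub]
  have hu_succ_le : u (n+1) ≤ Real.exp 1 * u n := by
    rw [hu_succ_eq]
    calc u n * Real.exp (((n:ℝ)+1)^a - na) ≤ u n * Real.exp 1 :=
          mul_le_mul_of_nonneg_left hexpδ (hu_pos n).le
      _ = Real.exp 1 * u n := by ring
  have hgap : u (n+1) - u n ≤ Real.exp 1 * u n * (n:ℝ)^(a-1) := by
    set δ := ((n:ℝ)+1)^a - na with hδdef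
    have hδle : δ ≤ (n:ℝ)^(a-1) := by
      have h := mul_le_mul_of_nonneg_right ha1.le hpow_pos.le
      rw [one_mul] at h
      rw [hδdef]; linarith [hδub]
    have hδle1 : δ ≤ 1 := le_trans hδle hpow_le1
    have h1 : Real.exp δ - 1 ≤ δ * Real.exp δ := exp_sub_one_le δ
    have h2 : Real.exp δ ≤ Real.exp 1 := Real.exp_le_exp.mpr hδle1
    have h3 : u (n+1) - u n = u n * (Real.exp δ - 1) := by
      rw [hu_succ_eq]; ring
    rw [h3]
    calc u n * (Real.exp δ - 1) ≤ u n * (δ * Real.exp δ) :=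
          mul_le_mul_of_nonneg_left h1 (hu_pos n).le
      _ ≤ u n * ((n:ℝ)^(a-1) * Real.exp 1) := by
          exact mul_le_mul_of_nonneg_left
            (mul_le_mul hδle h2 (Real.exp_pos δ).le hpow_pos.le) (hu_pos n).le
      _ = Real.exp 1 * u n * (n:ℝ)^(a-1) := by ring
  -- W = u n * n^(a-1) and its relation with the target
  have hexp_id : (n:ℝ)^(a-1) = ((n:ℝ)^(a*γ))⁻¹ := by
    rw [← Real.rpow_neg (by linarith : (0:ℝ) ≤ (n:ℝ))]
    congr 1
    rw [haγ]; ring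
  have hnaγ_pos : (0:ℝ) < (n:ℝ)^(a*γ) := Real.rpow_pos_of_pos (by linarith) _
  have hW1 : 1 ≤ u n * (n:ℝ)^(a-1) := by
    have h := hN₁ n (by omega)
    rw [hexp_id, ← div_eq_mul_inv, le_div_iff₀ hnaγ_pos, one_mul]
    exact h
  -- the log of P
  have hL_lb : na ≤ L := by
    have h1 : Real.log Pn ≤ L := Real.log_le_log (by linarith) hPn_le
    exact le_trans (hlog_lb n) h1
  have hL1 : 1 ≤ L := le_trans hna1 hL_lb
  have hL_ub : L ≤ 3 * na := by
    have hu_n1_pos := hu_pos (n+1)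
    have hu_n1_ge : 1 ≤ u (n+1) := le_trans hun1 (hu_mono (by omega))
    have h1 : P ≤ 2 * u (n+1) := by linarith
    have h2 : L ≤ Real.log (2 * u (n+1)) := Real.log_le_log hP0 h1
    rw [Real.log_mul (by norm_num) (ne_of_gt hu_n1_pos)] at h2
    have h3 : Real.log (u (n+1)) = ((n+1:ℕ):ℝ)^a := by
      simp only [hudef, Real.log_exp]
    rw [h3, hcastn1] at h2
    have h4 : Real.log 2 ≤ 1 := by
      have := Real.log_le_sub_one_of_pos (by norm_num : (0:ℝ) < 2)
      linarith
    linarith [hδ1, hna1]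
  -- target comparison
  have hLγ_pos : (0:ℝ) < L ^ γ := Real.rpow_pos_of_pos (by linarith) γ
  have hT_lb : u n / (3^γ * (n:ℝ)^(a*γ)) ≤ P / L ^ γ := by
    have h1 : L ^ γ ≤ (3*na) ^ γ :=
      Real.rpow_le_rpow (by linarith) hL_ub hγ0.le
    have h2 : (3*na) ^ γ = 3^γ * (n:ℝ)^(a*γ) := by
      rw [Real.mul_rpow (by norm_num) (by positivity), hnadef,
        ← Real.rpow_mul (Nat.cast_nonneg n)]
    rw [← h2]
    apply div_le_div₀ hP0.le (by linarith [hu_n, hPn_le]) hLγ_pos h1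
  have h3γ_pos : (0:ℝ) < 3^γ := Real.rpow_pos_of_pos (by norm_num) γ
  have hWT : u n * (n:ℝ)^(a-1) ≤ 3^γ * (P / L ^ γ) := by
    have h2 : u n / (3^γ * (n:ℝ)^(a*γ)) = (u n / (n:ℝ)^(a*γ)) / 3^γ := by
      rw [div_div]
      ring_nf
    have h3 : u n / (n:ℝ)^(a*γ) ≤ P / L^γ * 3^γ :=
      (div_le_iff₀ h3γ_pos).mp (by rw [← h2]; exact hT_lb)
    calc u n * (n:ℝ)^(a-1) = u n / (n:ℝ)^(a*γ) := by
          rw [hexp_id, div_eq_mul_inv]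
      _ ≤ P / L^γ * 3^γ := h3
      _ = 3^γ * (P / L^γ) := by ring
  -- piece bounds
  have hεf_eq : ∀ m : ℕ, εf m = PsiSum ψ (Qn m) / Real.log (PsiSum ψ (Qn m)) ^ γ :=
    fun m => rfl
  have hnaγrw : na ^ γ = (n:ℝ)^(a*γ) := by
    rw [hnadef, ← Real.rpow_mul (Nat.cast_nonneg n)]
  have hLn_ge : na ≤ Real.log Pn := hlog_lb n
  have hLn1_ge : na ≤ Real.log Pn1 := by
    have h1 : (n:ℝ)^a ≤ ((n+1:ℕ):ℝ)^a :=
      Real.rpow_le_rpow (Nat.cast_nonneg n) (by push_cast; linarith) ha0.le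
    exact le_trans h1 (hlog_lb (n+1))
  have hεn_pos : 0 < εf n := by
    rw [hεf_eq, ← hPndef]
    have : (0:ℝ) < Real.log Pn ^ γ := Real.rpow_pos_of_pos (by linarith [hna1]) γ
    positivity
  have hεn1_pos : 0 < εf (n+1) := by
    rw [hεf_eq, ← hPn1def]
    have h0 : (0:ℝ) < Pn1 := by linarith
    have : (0:ℝ) < Real.log Pn1 ^ γ := Real.rpow_pos_of_pos (by linarith [hna1]) γ
    positivity
  have hdenom_n : (n:ℝ)^(a*γ) ≤ Real.log Pn ^ γ := by
    rw [← hnaγrw]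
    exact Real.rpow_le_rpow (by linarith) hLn_ge hγ0.le
  have hdenom_n1 : (n:ℝ)^(a*γ) ≤ Real.log Pn1 ^ γ := by
    rw [← hnaγrw]
    exact Real.rpow_le_rpow (by linarith) hLn1_ge hγ0.le
  have hdiv_id : ∀ c : ℝ, c / (n:ℝ)^(a*γ) = c * (n:ℝ)^(a-1) := by
    intro c
    rw [hexp_id, div_eq_mul_inv]
  have hεn_ub : εf n ≤ 2 * (u n * (n:ℝ)^(a-1)) := by
    rw [hεf_eq, ← hPndef]
    calc Pn / Real.log Pn ^ γ ≤ (2 * u n) / (n:ℝ)^(a*γ) := by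
          apply div_le_div₀ (by positivity) (by linarith [hQupper n]) hnaγ_pos hdenom_n
      _ = 2 * (u n * (n:ℝ)^(a-1)) := by rw [hdiv_id]; ring
  have hεn1_ub : εf (n+1) ≤ 2 * Real.exp 1 * (u n * (n:ℝ)^(a-1)) := by
    rw [hεf_eq, ← hPn1def]
    have hu1ge : 1 ≤ u (n+1) := le_trans hun1 (hu_mono (by omega))
    have hnum : Pn1 ≤ 2 * Real.exp 1 * u n := by
      have hup := hQupper (n+1)
      rw [← hPn1def] at hup
      have h5 : 1 ≤ Real.exp 1 * u n := le_trans hu1ge hu_succ_le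
      linarith [hu_succ_le]
    calc Pn1 / Real.log Pn1 ^ γ ≤ (2 * Real.exp 1 * u n) / (n:ℝ)^(a*γ) := by
          apply div_le_div₀ (by positivity) hnum hnaγ_pos hdenom_n1
      _ = 2 * Real.exp 1 * (u n * (n:ℝ)^(a-1)) := by rw [hdiv_id]; ring
  have hD_ub : Pn1 - Pn ≤ (Real.exp 1 + 1) * (u n * (n:ℝ)^(a-1)) := by
    have h1 : Pn1 - Pn ≤ (u (n+1) - u n) + 1 := by
      have := hQupper (n+1)
      rw [← hPn1def] at this
      linarith [hu_n]
    linarith [hgap, hW1]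
  -- absolute value bound
  obtain ⟨hgnl, hgnr⟩ := abs_lt.mp hgn
  obtain ⟨hgn1l, hgn1r⟩ := abs_lt.mp hgn1
  have hS1 : Sfun ψ (Qn n) α ≤ Sfun ψ Q α := Sfun_mono ψ hQn_le α
  have hS2 : Sfun ψ Q α ≤ Sfun ψ (Qn (n+1)) α := Sfun_mono ψ hQlt.le α
  have habs : |Sfun ψ Q α - P| ≤ εf n + εf (n+1) + (Pn1 - Pn) := by
    rw [abs_le]
    constructor
    · linarith
    · linarith
  have hW_pos : 0 < u n * (n:ℝ)^(a-1) := by positivity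
  calc |Sfun ψ Q α - P| ≤ εf n + εf (n+1) + (Pn1 - Pn) := habs
    _ ≤ 2 * (u n * (n:ℝ)^(a-1)) + 2 * Real.exp 1 * (u n * (n:ℝ)^(a-1))
        + (Real.exp 1 + 1) * (u n * (n:ℝ)^(a-1)) := by linarith
    _ = (3 * Real.exp 1 + 3) * (u n * (n:ℝ)^(a-1)) := by ring
    _ ≤ (3 * Real.exp 1 + 3) * (3^γ * (P / L ^ γ)) := by
        apply mul_le_mul_of_nonneg_left hWT
        positivity
    _ = 3 ^ γ * (3 * Real.exp 1 + 3) * (P / L ^ γ) := by ring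
end
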